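/- arXiv:1111.1136 — 5 statements merged into one kernel-verified Lean document; each statement's English description precedes it below -/
import Mathlib

section
/- Let f : K → ℝ be α-exp-concave on convex K, let x₁,…,x_c ∈ K, let p ∈ ℝ^c be a probability vector, and set x̄ = ∑ⱼ p⁽ʲ⁾ xⱼ. Define the updated weight q⁽ⁱ⁾ = p⁽ⁱ⁾·exp(−α f(xᵢ)) / ∑ⱼ p⁽ʲ⁾·exp(−α f(xⱼ)). Then for every i with p⁽ⁱ⁾ > 0, f(x̄) − f(xᵢ) ≤ α⁻¹ · ln(q⁽ⁱ⁾ / p⁽ⁱ⁾). -/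
/-- Per-round regret inequality of the exponentially weighted average forecaster
with an α-exp-concave loss: f(x̄) − f(xᵢ) ≤ α⁻¹·ln(q⁽ⁱ⁾/p⁽ⁱ⁾) where q is the
multiplicative-weights update of p. -/
theorem exp_weights_per_round_regret
    {d : ℕ} (K : Set (EuclideanSpace ℝ (Fin d))) (hK : Convex ℝ K)
    (f : EuclideanSpace ℝ (Fin d) → ℝ) (α : ℝ) (hα : 0 < α)
    (hconc : ConcaveOn ℝ K (fun x => Real.exp (-α * f x)))
    (c : ℕ) (x : Fin c → EuclideanSpace ℝ (Fin d)) (hx : ∀ j, x j ∈ K)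
    (p : Fin c → ℝ) (hp : ∀ j, 0 ≤ p j) (hp1 : ∑ j, p j = 1)
    (xbar : EuclideanSpace ℝ (Fin d)) (hxbar : xbar = ∑ j, p j • x j)
    (q : Fin c → ℝ)
    (hq : ∀ i, q i = p i * Real.exp (-α * f (x i)) /
      ∑ j, p j * Real.exp (-α * f (x j))) :
    ∀ i, 0 < p i → f xbar - f (x i) ≤ α⁻¹ * Real.log (q i / p i) := by
  intro i hpi
  set S := ∑ j, p j * Real.exp (-α * f (x j)) with hS
  have hSpos : 0 < S := by
    apply Finset.sum_pos' (fun j _ => mul_nonneg (hp j) (Real.exp_pos _).le)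
    exact ⟨i, Finset.mem_univ i, mul_pos hpi (Real.exp_pos _)⟩
  have jensen : S ≤ Real.exp (-α * f xbar) := by
    rw [hxbar]
    have := hconc.le_map_sum (t := Finset.univ) (w := p) (p := x)
      (fun j _ => hp j) hp1 (fun j _ => hx j)
    simpa [hS, smul_eq_mul, neg_mul] using this
  have hlog : Real.log S ≤ -α * f xbar := by
    have := Real.log_le_log hSpos jensen
    rwa [Real.log_exp] at this
  have hqp : q i / p i = Real.exp (-α * f (x i)) / S := by
    rw [hq i]
    field_simp
  rw [hqp, Real.log_div (Real.exp_pos _).ne' hSpos.ne', Real.log_exp]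
  have key : α⁻¹ * (-α * f (x i) + α * f xbar) = f xbar - f (x i) := by
    field_simp
    ring
  have h2 : α⁻¹ * (-α * f (x i) + α * f xbar) ≤ α⁻¹ * (-α * f (x i) - Real.log S) := by
    apply mul_le_mul_of_nonneg_left (by linarith) (inv_nonneg.mpr hα.le)
  linarith
end

section
/- Let x₁,…,x_T ∈ ℝ be a deterministic signal, let n₁,…,n_T be independent zero-mean random variables with common variance σ², and let y_t = x_t + n_t. For t ≥ d let Y_t = (y_t,…,y_{t−d+1}) ∈ ℝ^d and X_t = (x_t,…,x_{t−d+1}). Define the true loss l_t(w) = (x_t − wᵀY_t)² and the estimated loss l̂_t(w) = (y_t − wᵀY_t)² + 2wᵀc where c = (σ², 0, …, 0) ∈ ℝ^d. If w_t is a random vector measurable with respect to (y₁,…,y_{t−1}) only, then for every fixed w ∈ ℝ^d: E[∑_{t} l̂_t(w_t) − ∑_t l̂_t(w)] = E[∑_t l_t(w_t) − ∑_t l_t(w)]. -/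
open MeasureTheory ProbabilityTheory

/-- Expectation of a quadratic `a u² + b u + c` under a probability law with mean 0 and
(possibly junk) second moment `s`, assuming only integrability of the whole expression. -/
private lemma quad_integral (ν : Measure ℝ) [IsProbabilityMeasure ν] {s : ℝ}
    (h0 : ∫ u, u ∂ν = 0) (hs : ∫ u, u ^ 2 ∂ν = s) (a b c : ℝ)
    (hint : Integrable (fun u => a * u ^ 2 + b * u + c) ν) :
    ∫ u, (a * u ^ 2 + b * u + c) ∂ν = a * s + c := by
  by_cases hu2 : Integrable (fun u : ℝ => u ^ 2) ν
  · have hu1 : Integrable (fun u : ℝ => u) ν := by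
      refine ((integrable_const (1 : ℝ)).add hu2).mono'
        measurable_id.aestronglyMeasurable ?_
      filter_upwards with u
      simp only [Real.norm_eq_abs, id_eq, Pi.add_apply]
      nlinarith [sq_nonneg (|u| - 1), sq_abs u, abs_nonneg u]
    have hq : Integrable (fun u : ℝ => a * u ^ 2 + b * u) ν :=
      (hu2.const_mul a).add (hu1.const_mul b)
    have ha2 : Integrable (fun u : ℝ => a * u ^ 2) ν := hu2.const_mul a
    have hb1 : Integrable (fun u : ℝ => b * u) ν := hu1.const_mul b
    rw [integral_add hq (integrable_const c), integral_add ha2 hb1,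
      integral_const_mul, integral_const_mul, h0, hs, integral_const]
    simp
  · have hs0 : s = 0 := by rw [← hs, integral_undef hu2]
    have ha : a = 0 := by
      by_contra ha
      apply hu2
      have h1 : Integrable (fun u : ℝ => (u + b / (2 * a)) ^ 2) ν := by
        have h2 : Integrable (fun u : ℝ =>
            (1 / a) * (a * u ^ 2 + b * u + c) + (b ^ 2 / (4 * a ^ 2) - c / a)) ν :=
          (hint.const_mul _).add (integrable_const _)
        refine h2.congr ?_
        filter_upwards with u
        field_simp
        ring
      refine ((h1.const_mul 2).add (integrable_const (2 * (b / (2 * a)) ^ 2))).mono'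
        (measurable_id.pow_const 2).aestronglyMeasurable ?_
      filter_upwards with u
      simp only [Real.norm_eq_abs, Pi.add_apply, id_eq]
      rw [abs_of_nonneg (sq_nonneg u)]
      nlinarith [sq_nonneg (u + 2 * (b / (2 * a)))]
    subst ha
    subst hs0
    simp only [zero_mul, zero_add] at hint ⊢
    by_cases hu1 : Integrable (fun u : ℝ => u) ν
    · have hb1 : Integrable (fun u : ℝ => b * u) ν := hu1.const_mul b
      rw [integral_add hb1 (integrable_const c), integral_const_mul, h0, integral_const]
      simp
    · have hb : b = 0 := by
        by_contra hb
        apply hu1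
        have h3 : Integrable (fun u : ℝ => b * u) ν := by
          have h5 : Integrable (fun u : ℝ => b * u + c - c) ν := hint.sub (integrable_const c)
          simpa using h5
        have h4 := h3.const_mul (1 / b)
        refine h4.congr ?_
        filter_upwards with u
        field_simp
      subst hb
      simp

/-- If `Z` is measurable w.r.t. the σ-algebra generated by `F` and `F` is independent of `N`,
then `Z` is independent of `N`. -/
private lemma indepFun_of_comap {Ω β γ δ : Type*} {mΩ : MeasurableSpace Ω}
    {mβ : MeasurableSpace β} {mγ : MeasurableSpace γ} {mδ : MeasurableSpace δ}
    {μ : Measure Ω} {F : Ω → β} {N : Ω → γ} {Z : Ω → δ} (h : IndepFun F N μ)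
    (hZ : @Measurable Ω δ (MeasurableSpace.comap F mβ) mδ Z) : IndepFun Z N μ := by
  rw [indepFun_iff_measure_inter_preimage_eq_mul] at h ⊢
  intro s t hs ht
  obtain ⟨s', hs', heq⟩ := hZ hs
  rw [← heq]
  exact h s' t hs' ht

/-- Core lemma: `E[A N² + B N + C] = E[A s + C]` when `(A,B,C)` is generated by `F`,
`F ⟂ N`, `E[N] = 0`, `E[N²] = s`, assuming only integrability of the whole expression. -/
private lemma core_expectation {Ω : Type*} {mΩ : MeasurableSpace Ω} (μ : Measure Ω)
    [IsProbabilityMeasure μ] {δ : Type*} [MeasurableSpace δ] (F : Ω → δ) (N : Ω → ℝ)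
    (hN : Measurable N) (hFN : IndepFun F N μ) (hFm : Measurable F)
    (A B C : Ω → ℝ)
    (hA : @Measurable Ω ℝ (MeasurableSpace.comap F inferInstance) _ A)
    (hB : @Measurable Ω ℝ (MeasurableSpace.comap F inferInstance) _ B)
    (hC : @Measurable Ω ℝ (MeasurableSpace.comap F inferInstance) _ C)
    {s : ℝ} (h0 : ∫ ω, N ω ∂μ = 0) (hs : ∫ ω, (N ω) ^ 2 ∂μ = s)
    (hD : Integrable (fun ω => A ω * (N ω) ^ 2 + B ω * N ω + C ω) μ) :
    ∫ ω, (A ω * (N ω) ^ 2 + B ω * N ω + C ω) ∂μ = ∫ ω, (A ω * s + C ω) ∂μ := by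
  have hle : MeasurableSpace.comap F inferInstance ≤ mΩ := measurable_iff_comap_le.mp hFm
  have hZG : @Measurable Ω (ℝ × ℝ × ℝ) (MeasurableSpace.comap F inferInstance) _
      (fun ω => (A ω, B ω, C ω)) := hA.prodMk (hB.prodMk hC)
  have hZ : Measurable (fun ω => (A ω, B ω, C ω)) := hZG.mono hle le_rfl
  have hZN : IndepFun (fun ω => (A ω, B ω, C ω)) N μ := indepFun_of_comap hFN hZG
  have hmap : μ.map (fun ω => ((A ω, B ω, C ω), N ω)) =
      (μ.map (fun ω => (A ω, B ω, C ω))).prod (μ.map N) :=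
    (indepFun_iff_map_prod_eq_prod_map_map hZ.aemeasurable hN.aemeasurable).mp hZN
  have hf : Measurable (fun p : (ℝ × ℝ × ℝ) × ℝ =>
      p.1.1 * p.2 ^ 2 + p.1.2.1 * p.2 + p.1.2.2) := by fun_prop
  have hpm : Measurable (fun ω => ((A ω, B ω, C ω), N ω)) := hZ.prodMk hN
  haveI : IsProbabilityMeasure (μ.map N) := Measure.isProbabilityMeasure_map hN.aemeasurable
  haveI : IsProbabilityMeasure (μ.map (fun ω => (A ω, B ω, C ω))) :=
    Measure.isProbabilityMeasure_map hZ.aemeasurable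
  have hintf : Integrable (fun p : (ℝ × ℝ × ℝ) × ℝ =>
      p.1.1 * p.2 ^ 2 + p.1.2.1 * p.2 + p.1.2.2)
      ((μ.map (fun ω => (A ω, B ω, C ω))).prod (μ.map N)) := by
    rw [← hmap]
    rw [integrable_map_measure hf.aestronglyMeasurable hpm.aemeasurable]
    exact hD
  have hν0 : ∫ u, u ∂(μ.map N) = 0 := by
    rw [integral_map hN.aemeasurable (f := fun u : ℝ => u)
      measurable_id'.aestronglyMeasurable]
    exact h0
  have hνs : ∫ u, u ^ 2 ∂(μ.map N) = s := by
    rw [integral_map hN.aemeasurable (f := fun u : ℝ => u ^ 2)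
      ((measurable_id'.pow_const 2).aestronglyMeasurable)]
    exact hs
  calc ∫ ω, (A ω * (N ω) ^ 2 + B ω * N ω + C ω) ∂μ
      = ∫ p : (ℝ × ℝ × ℝ) × ℝ, (p.1.1 * p.2 ^ 2 + p.1.2.1 * p.2 + p.1.2.2)
          ∂((μ.map (fun ω => (A ω, B ω, C ω))).prod (μ.map N)) := by
        rw [← hmap, integral_map hpm.aemeasurable hf.aestronglyMeasurable]
    _ = ∫ z : ℝ × ℝ × ℝ, ∫ u, (z.1 * u ^ 2 + z.2.1 * u + z.2.2) ∂(μ.map N)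
          ∂(μ.map (fun ω => (A ω, B ω, C ω))) := integral_prod _ hintf
    _ = ∫ z : ℝ × ℝ × ℝ, (z.1 * s + z.2.2) ∂(μ.map (fun ω => (A ω, B ω, C ω))) := by
        refine integral_congr_ae ?_
        filter_upwards [hintf.prod_right_ae] with z hz
        exact quad_integral _ hν0 hνs _ _ _ hz
    _ = ∫ ω, (A ω * s + C ω) ∂μ := by
        rw [integral_map hZ.aemeasurable (f := fun z : ℝ × ℝ × ℝ => z.1 * s + z.2.2)
          ((by fun_prop : Measurable (fun z : ℝ × ℝ × ℝ =>
            z.1 * s + z.2.2)).aestronglyMeasurable)]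




open MeasureTheory ProbabilityTheory Finset in
/-- The expected regret measured with the observable surrogate losses
l̂_t(w) = (y_t − wᵀY_t)² + 2σ²w₁ equals the expected regret measured with the true
losses l_t(w) = (x_t − wᵀY_t)², provided each filter w_t is measurable with
respect to the past observations y₁,…,y_{t−1} only. -/
theorem surrogate_regret_eq_true_regret
    {Ω : Type*} [MeasurableSpace Ω] (μ : Measure Ω) [IsProbabilityMeasure μ]
    (n : ℕ → Ω → ℝ) (hmeas : ∀ t, Measurable (n t))
    (hindep : iIndepFun n μ)
    (σ : ℝ) (hmean : ∀ t, ∫ ω, n t ω ∂μ = 0)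
    (hvar : ∀ t, ∫ ω, (n t ω) ^ 2 ∂μ = σ ^ 2)
    (x : ℕ → ℝ) (y : ℕ → Ω → ℝ) (hy : ∀ t ω, y t ω = x t + n t ω)
    (d T : ℕ) (hd : 1 ≤ d) (hdT : d ≤ T)
    (Y : ℕ → Ω → Fin d → ℝ) (hY : ∀ t ω i, Y t ω i = y (t - (i : ℕ)) ω)
    (l lhat : ℕ → (Fin d → ℝ) → Ω → ℝ)
    (hl : ∀ t w ω, l t w ω = (x t - ∑ i, w i * Y t ω i) ^ 2)
    (hlhat : ∀ t w ω, lhat t w ω = (y t ω - ∑ i, w i * Y t ω i) ^ 2 + 2 * σ ^ 2 * w ⟨0, hd⟩)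
    (wt : ℕ → Ω → Fin d → ℝ)
    (hwtmeas : ∀ t, @Measurable Ω (Fin d → ℝ)
      (MeasurableSpace.comap (fun ω => (fun i : Fin (t - 1) => y ((i : ℕ) + 1) ω))
        inferInstance) _ (wt t))
    (w : Fin d → ℝ)
    (hint1 : ∀ t, Integrable (fun ω => lhat t (wt t ω) ω) μ)
    (hint2 : ∀ t, Integrable (fun ω => lhat t w ω) μ)
    (hint3 : ∀ t, Integrable (fun ω => l t (wt t ω) ω) μ)
    (hint4 : ∀ t, Integrable (fun ω => l t w ω) μ) :
    ∫ ω, ∑ t ∈ Icc d T, (lhat t (wt t ω) ω - lhat t w ω) ∂μ =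
    ∫ ω, ∑ t ∈ Icc d T, (l t (wt t ω) ω - l t w ω) ∂μ := by
  classical
  have key : ∀ t ∈ Icc d T, ∀ v : Ω → Fin d → ℝ,
      (@Measurable Ω (Fin d → ℝ)
        (MeasurableSpace.comap (fun ω => (fun i : Fin (t - 1) => y ((i : ℕ) + 1) ω))
          inferInstance) _ v) →
      Integrable (fun ω => lhat t (v ω) ω) μ → Integrable (fun ω => l t (v ω) ω) μ →
      ∫ ω, lhat t (v ω) ω ∂μ - ∫ ω, l t (v ω) ω ∂μ = σ ^ 2 := by
    intro t ht v hv hI1 hI2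
    have htd : d ≤ t := (Finset.mem_Icc.mp ht).1
    have ht1 : 1 ≤ t := le_trans hd htd
    set z0 : Fin d := ⟨0, hd⟩ with hz0def
    set F : Ω → Fin (t - 1) → ℝ := fun ω i => n ((i : ℕ) + 1) ω with hFdef
    have hFm : Measurable F := measurable_pi_lambda _ fun i => hmeas _
    -- independence of the past noises from the current noise
    have hFN : IndepFun F (n t) μ := by
      have hdis : Disjoint (Finset.Ioo 0 t) ({t} : Finset ℕ) := by
        simp [Finset.disjoint_singleton_right]
      have h1 := hindep.indepFun_finset (Finset.Ioo 0 t) {t} hdis hmeas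
      have hφ : Measurable (fun (p : {i // i ∈ Finset.Ioo 0 t} → ℝ) =>
          fun i : Fin (t - 1) => p ⟨(i : ℕ) + 1,
            Finset.mem_Ioo.mpr ⟨Nat.succ_pos _, by have := i.isLt; omega⟩⟩) :=
        measurable_pi_lambda _ fun i => measurable_pi_apply _
      have hψ : Measurable (fun (p : {i // i ∈ ({t} : Finset ℕ)} → ℝ) =>
          p ⟨t, Finset.mem_singleton_self t⟩) := measurable_pi_apply _
      exact h1.comp hφ hψ
    -- the past observations are generated by the past noises
    have hyF : (fun ω => (fun i : Fin (t - 1) => y ((i : ℕ) + 1) ω)) =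
        (fun p : Fin (t - 1) → ℝ => fun i : Fin (t - 1) => x ((i : ℕ) + 1) + p i) ∘ F := by
      funext ω
      funext i
      simp [hy, hFdef, Function.comp]
    have hgm : Measurable
        (fun p : Fin (t - 1) → ℝ => fun i : Fin (t - 1) => x ((i : ℕ) + 1) + p i) :=
      measurable_pi_lambda _ fun i => measurable_const.add (measurable_pi_apply i)
    have hle : MeasurableSpace.comap
        (fun ω => (fun i : Fin (t - 1) => y ((i : ℕ) + 1) ω)) inferInstance ≤
        MeasurableSpace.comap F inferInstance := by
      rw [hyF, ← MeasurableSpace.comap_comp]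
      exact MeasurableSpace.comap_mono (measurable_iff_comap_le.mp hgm)
    have hvF : @Measurable Ω (Fin d → ℝ) (MeasurableSpace.comap F inferInstance) _ v :=
      hv.mono hle le_rfl
    have hFGm : @Measurable Ω (Fin (t - 1) → ℝ)
        (MeasurableSpace.comap F inferInstance) _ F := measurable_iff_comap_le.mpr le_rfl
    have hvim : ∀ i : Fin d,
        @Measurable Ω ℝ (MeasurableSpace.comap F inferInstance) _ (fun ω => v ω i) :=
      fun i => (measurable_pi_apply i).comp hvF
    have hyim : ∀ i : Fin d, i ≠ z0 → @Measurable Ω ℝ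
        (MeasurableSpace.comap F inferInstance) _ (fun ω => y (t - (i : ℕ)) ω) := by
      intro i hi
      have h1 : 1 ≤ (i : ℕ) :=
        Nat.one_le_iff_ne_zero.mpr (fun h0 => hi (Fin.ext h0))
      have h2 : (i : ℕ) < d := i.isLt
      have hk : t - (i : ℕ) - 1 + 1 = t - (i : ℕ) := by omega
      have hlt : t - (i : ℕ) - 1 < t - 1 := by omega
      have heq : (fun ω => y (t - (i : ℕ)) ω) =
          (fun p : Fin (t - 1) → ℝ => x (t - (i : ℕ)) + p ⟨t - (i : ℕ) - 1, hlt⟩) ∘ F := by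
        funext ω
        simp only [Function.comp, hFdef]
        rw [hy]
        congr 2
        omega
      rw [heq]
      exact (measurable_const.add (measurable_pi_apply _)).comp hFGm
    -- the three coefficient processes
    have hA : @Measurable Ω ℝ (MeasurableSpace.comap F inferInstance) _
        (fun ω => 1 - 2 * v ω z0) := measurable_const.sub ((hvim z0).const_mul 2)
    have hsumM : @Measurable Ω ℝ (MeasurableSpace.comap F inferInstance) _
        (fun ω => ∑ i ∈ Finset.univ.erase z0, v ω i * y (t - (i : ℕ)) ω) :=
      Finset.measurable_sum _ fun i hi =>
        (hvim i).mul (hyim i (Finset.ne_of_mem_erase hi))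
    have hB : @Measurable Ω ℝ (MeasurableSpace.comap F inferInstance) _
        (fun ω => 2 * (x t * (1 - v ω z0) -
          ∑ i ∈ Finset.univ.erase z0, v ω i * y (t - (i : ℕ)) ω)) :=
      (((measurable_const.sub (hvim z0)).const_mul (x t)).sub hsumM).const_mul 2
    have hC : @Measurable Ω ℝ (MeasurableSpace.comap F inferInstance) _
        (fun ω => 2 * σ ^ 2 * v ω z0) := (hvim z0).const_mul (2 * σ ^ 2)
    -- pointwise decomposition of the difference of losses
    have hpt : ∀ ω, lhat t (v ω) ω - l t (v ω) ω =
        (1 - 2 * v ω z0) * (n t ω) ^ 2 +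
        (2 * (x t * (1 - v ω z0) -
          ∑ i ∈ Finset.univ.erase z0, v ω i * y (t - (i : ℕ)) ω)) * n t ω +
        2 * σ ^ 2 * v ω z0 := by
      intro ω
      have hsum : ∑ i, v ω i * Y t ω i = v ω z0 * (x t + n t ω) +
          ∑ i ∈ Finset.univ.erase z0, v ω i * y (t - (i : ℕ)) ω := by
        rw [← Finset.add_sum_erase _ _ (Finset.mem_univ z0)]
        congr 1
        · rw [hY, hy]
          have h0 : ((z0 : Fin d) : ℕ) = 0 := rfl
          rw [h0, Nat.sub_zero]
        · exact Finset.sum_congr rfl fun i _ => by rw [hY]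
      rw [hlhat, hl, hsum, hy]
      ring
    have hD0 : Integrable (fun ω => lhat t (v ω) ω - l t (v ω) ω) μ := hI1.sub hI2
    have hD : Integrable (fun ω =>
        (1 - 2 * v ω z0) * (n t ω) ^ 2 +
        (2 * (x t * (1 - v ω z0) -
          ∑ i ∈ Finset.univ.erase z0, v ω i * y (t - (i : ℕ)) ω)) * n t ω +
        2 * σ ^ 2 * v ω z0) μ := hD0.congr (ae_of_all μ hpt)
    have hcore := core_expectation μ F (n t) (hmeas t) hFN hFm _ _ _ hA hB hC
      (hmean t) (hvar t) hD
    have hconst : (fun ω => (1 - 2 * v ω z0) * σ ^ 2 + 2 * σ ^ 2 * v ω z0) =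
        fun _ : Ω => σ ^ 2 := by
      funext ω
      ring
    rw [← integral_sub hI1 hI2]
    calc ∫ ω, (lhat t (v ω) ω - l t (v ω) ω) ∂μ
        = ∫ ω, ((1 - 2 * v ω z0) * (n t ω) ^ 2 +
            (2 * (x t * (1 - v ω z0) -
              ∑ i ∈ Finset.univ.erase z0, v ω i * y (t - (i : ℕ)) ω)) * n t ω +
            2 * σ ^ 2 * v ω z0) ∂μ := integral_congr_ae (ae_of_all μ hpt)
      _ = ∫ ω, ((1 - 2 * v ω z0) * σ ^ 2 + 2 * σ ^ 2 * v ω z0) ∂μ := hcore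
      _ = σ ^ 2 := by rw [hconst, integral_const]; simp
  have hs1 : ∀ t ∈ Icc d T,
      Integrable (fun ω => lhat t (wt t ω) ω - lhat t w ω) μ :=
    fun t _ => (hint1 t).sub (hint2 t)
  have hs2 : ∀ t ∈ Icc d T,
      Integrable (fun ω => l t (wt t ω) ω - l t w ω) μ :=
    fun t _ => (hint3 t).sub (hint4 t)
  rw [integral_finset_sum _ hs1, integral_finset_sum _ hs2]
  refine Finset.sum_congr rfl fun t ht => ?_
  rw [integral_sub (hint1 t) (hint2 t), integral_sub (hint3 t) (hint4 t)]
  have k1 := key t ht (wt t) (hwtmeas t) (hint1 t) (hint3 t)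
  have k2 := key t ht (fun _ => w) measurable_const (hint2 t) (hint4 t)
  linarith
end

section
/- Consider online learning where iterations 1..T (T = b·k) are grouped into blocks of length k, a filter w_c is used throughout block c and is measurable with respect to noise up to the end of block c−1. With l_t, l̂_t as above and L^k_{ck}(w) = ∑_{t=(c−1)k+1}^{ck} l̂_t(w) + (w − w_c)ᵀ[(k−d+1)σ²I − ∑_{τ=(c−1)k+d}^{ck} Y_τY_τᵀ](w − w_c), it holds for every fixed w ∈ ℝ^d that E[∑_{t=1}^T l_t(w_t) − ∑_{t=1}^T l_t(w)] ≤ E[∑_{c=1}^{T/k} L^k_{ck}(w_c) − ∑_{c=1}^{T/k} L^k_{ck}(w)]. -/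
open MeasureTheory ProbabilityTheory Finset
lemma sum_Ioc_blocks {M : Type*} [AddCommMonoid M] (f : ℕ → M) (k : ℕ) (b : ℕ) :
    ∑ t ∈ Finset.Ioc 0 (b * k), f t
      = ∑ c ∈ Finset.Icc 1 b, ∑ t ∈ Finset.Ioc ((c - 1) * k) (c * k), f t := by
  induction b with
  | zero => simp
  | succ m ih =>
    have h1 : Finset.Icc 1 (m + 1) = insert (m + 1) (Finset.Icc 1 m) := by
      ext a; simp [Finset.mem_Icc, Finset.mem_insert]; omega
    have h2 : m * k ≤ (m + 1) * k := by nlinarith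
    rw [h1, Finset.sum_insert (by simp), ← Finset.sum_Ioc_consecutive f (Nat.zero_le (m * k)) h2,
      ih, Nat.add_sub_cancel]
    exact add_comm _ _

example : True := trivial

lemma block_integral_nonneg
    {Ω : Type*} [MeasurableSpace Ω] (μ : Measure Ω) [IsProbabilityMeasure μ]
    (n : ℕ → Ω → ℝ) (hmeas : ∀ t, Measurable (n t))
    (hindep : iIndepFun n μ)
    (σ : ℝ)
    (hmean : ∀ t, ∫ ω, n t ω ∂μ = 0)
    (hvar : ∀ t, ∫ ω, (n t ω) ^ 2 ∂μ = σ ^ 2)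
    (x : ℕ → ℝ) (d k s : ℕ) (hd : 0 < d) (hdk : d ≤ k)
    (hL2 : ∀ j ∈ Finset.Ioc s (s + k), Integrable (fun ω => n j ω ^ 2) μ)
    (W : Ω → Fin d → ℝ)
    (hW : @Measurable Ω (Fin d → ℝ)
      (MeasurableSpace.comap (fun ω (j : (Finset.Icc 0 s : Finset ℕ)) => n (j : ℕ) ω)
        inferInstance) _ W)
    (w : Fin d → ℝ) (Φ : Ω → ℝ) (hΦint : Integrable Φ μ)
    (hΦ : ∀ ω, Φ ω =
      2 * ∑ t ∈ Finset.Ioc s (s + k),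
          n t ω * (∑ i : Fin d, (w i - W ω i) * (x (t - (i : ℕ)) + n (t - (i : ℕ)) ω))
        - 2 * k * σ ^ 2 * (w ⟨0, hd⟩ - W ω ⟨0, hd⟩)
        - ((k : ℝ) - d + 1) * σ ^ 2 * ∑ i : Fin d, (w i - W ω i) ^ 2
        + ∑ τ ∈ Finset.Icc (s + d) (s + k),
            (∑ i : Fin d, (w i - W ω i) * (x (τ - (i : ℕ)) + n (τ - (i : ℕ)) ω)) ^ 2) :
    0 ≤ ∫ ω, Φ ω ∂μ := by
  classical
  -- basic integrability of single noises on the block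
  have hMem2 : ∀ j ∈ Finset.Ioc s (s + k), MemLp (n j) 2 μ := fun j hj =>
    (memLp_two_iff_integrable_sq (hmeas j).aestronglyMeasurable).mpr (hL2 j hj)
  have hL1 : ∀ j ∈ Finset.Ioc s (s + k), Integrable (n j) μ := fun j hj =>
    (hMem2 j hj).integrable one_le_two
  -- product integrals of two block noises
  have hprod : ∀ p ∈ Finset.Ioc s (s + k), ∀ q ∈ Finset.Ioc s (s + k),
      Integrable (fun ω => n p ω * n q ω) μ ∧
      (∫ ω, n p ω * n q ω ∂μ) = (if p = q then σ ^ 2 else 0) := by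
    intro p hp q hq
    by_cases hpq : p = q
    · subst hpq
      have hsq : (fun ω => n p ω * n p ω) = fun ω => n p ω ^ 2 := by
        funext ω; ring
      rw [hsq, if_pos rfl]
      exact ⟨hL2 p hp, hvar p⟩
    · have hi : IndepFun (n p) (n q) μ := hindep.indepFun hpq
      constructor
      · exact hi.integrable_mul (hL1 p hp) (hL1 q hq)
      · rw [if_neg hpq]
        have h1 := hi.integral_mul_eq_mul_integral (hL1 p hp).aestronglyMeasurable (hL1 q hq).aestronglyMeasurable
        have h2 : (∫ ω, n p ω * n q ω ∂μ) = integral μ (n p * n q) := by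
          congr 1
        rw [h2, h1, hmean p, hmean q, mul_zero]
  -- the product-space setup
  set e := s + k with he
  let P : Ω → (↥(Finset.Icc 0 s) → ℝ) := fun ω j => n (j : ℕ) ω
  let Mf : Ω → (↥(Finset.Ioc s e) → ℝ) := fun ω j => n (j : ℕ) ω
  let Z : Ω → ((Fin d → ℝ) × (↥(Finset.Icc 0 s) → ℝ)) ×
      (↥(Finset.Ioc s e) → ℝ) := fun ω => ((W ω, P ω), Mf ω)
  let nu : ((Fin d → ℝ) × (↥(Finset.Icc 0 s) → ℝ)) ×
      (↥(Finset.Ioc s e) → ℝ) → ℕ → ℝ := fun z j =>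
    if h : j ∈ Finset.Icc 0 s then z.1.2 ⟨j, h⟩
    else if h' : j ∈ Finset.Ioc s e then z.2 ⟨j, h'⟩ else 0
  let F : ((Fin d → ℝ) × (↥(Finset.Icc 0 s) → ℝ)) ×
      (↥(Finset.Ioc s e) → ℝ) → ℝ := fun z =>
    2 * ∑ t ∈ Finset.Ioc s e,
        nu z t * (∑ i : Fin d, (w i - z.1.1 i) * (x (t - (i : ℕ)) + nu z (t - (i : ℕ))))
      - 2 * k * σ ^ 2 * (w ⟨0, hd⟩ - z.1.1 ⟨0, hd⟩)
      - ((k : ℝ) - d + 1) * σ ^ 2 * ∑ i : Fin d, (w i - z.1.1 i) ^ 2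
      + ∑ τ ∈ Finset.Icc (s + d) e,
          (∑ i : Fin d, (w i - z.1.1 i) * (x (τ - (i : ℕ)) + nu z (τ - (i : ℕ)))) ^ 2
  have hPmeas : Measurable P := measurable_pi_lambda _ fun j => hmeas _
  have hMmeas : Measurable Mf := measurable_pi_lambda _ fun j => hmeas _
  have hWmeas : Measurable W := hW.mono hPmeas.comap_le le_rfl
  have hQmeas : Measurable (fun ω => (W ω, P ω)) := hWmeas.prodMk hPmeas
  have hZmeas : Measurable Z := hQmeas.prodMk hMmeas
  have hnu : ∀ j, Measurable fun z : ((Fin d → ℝ) × (↥(Finset.Icc 0 s) → ℝ)) ×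
      (↥(Finset.Ioc s e) → ℝ) => nu z j := by
    intro j
    by_cases h : j ∈ Finset.Icc 0 s
    · simp only [nu, dif_pos h]
      exact (measurable_pi_apply _).comp (measurable_snd.comp measurable_fst)
    · by_cases h' : j ∈ Finset.Ioc s e
      · simp only [nu, dif_neg h, dif_pos h']
        exact (measurable_pi_apply _).comp measurable_snd
      · simp only [nu, dif_neg h, dif_neg h']; exact measurable_const
  have hz11 : ∀ i : Fin d, Measurable fun z : ((Fin d → ℝ) × (↥(Finset.Icc 0 s) → ℝ)) ×
      (↥(Finset.Ioc s e) → ℝ) => z.1.1 i :=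
    fun i => (measurable_pi_apply _).comp (measurable_fst.comp measurable_fst)
  have hF : Measurable F := by
    apply Measurable.add
    · apply Measurable.sub
      · apply Measurable.sub
        · exact ((Finset.measurable_sum _ fun t _ => ((hnu t).mul
            (Finset.measurable_sum _ fun i _ =>
              ((measurable_const.sub (hz11 i)).mul
                (measurable_const.add (hnu _)))))).const_mul 2)
        · exact (measurable_const.sub (hz11 _)).const_mul _
      · exact (Finset.measurable_sum _ fun i _ =>
          (measurable_const.sub (hz11 i)).pow_const 2).const_mul _
    · exact Finset.measurable_sum _ fun τ _ =>
        (Finset.measurable_sum _ fun i _ =>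
          ((measurable_const.sub (hz11 i)).mul
            (measurable_const.add (hnu _)))).pow_const 2
  -- F ∘ Z = Φ
  have hnuZ : ∀ (ω : Ω) (j : ℕ), j ≤ e → nu (Z ω) j = n j ω := by
    intro ω j hj
    by_cases h : j ∈ Finset.Icc 0 s
    · simp only [nu, dif_pos h]
      all_goals rfl
    · have h' : j ∈ Finset.Ioc s e := by
        simp only [Finset.mem_Icc] at h
        simp only [Finset.mem_Ioc]
        omega
      simp only [nu, dif_neg h, dif_pos h']
      all_goals rfl
  have hFZ : ∀ ω, F (Z ω) = Φ ω := by
    intro ω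
    rw [hΦ ω]
    have h1 : ∀ t ∈ Finset.Ioc s e,
        nu (Z ω) t * (∑ i : Fin d, (w i - (Z ω).1.1 i) * (x (t - (i : ℕ)) + nu (Z ω) (t - (i : ℕ))))
        = n t ω * (∑ i : Fin d, (w i - W ω i) * (x (t - (i : ℕ)) + n (t - (i : ℕ)) ω)) := by
      intro t ht
      simp only [Finset.mem_Ioc] at ht
      rw [hnuZ ω t ht.2]
      congr 1
      refine Finset.sum_congr rfl fun i _ => ?_
      rw [hnuZ ω (t - (i : ℕ)) (by omega)]
    have h2 : ∀ τ ∈ Finset.Icc (s + d) e,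
        (∑ i : Fin d, (w i - (Z ω).1.1 i) * (x (τ - (i : ℕ)) + nu (Z ω) (τ - (i : ℕ)))) ^ 2
        = (∑ i : Fin d, (w i - W ω i) * (x (τ - (i : ℕ)) + n (τ - (i : ℕ)) ω)) ^ 2 := by
      intro τ hτ
      simp only [Finset.mem_Icc] at hτ
      congr 1
      refine Finset.sum_congr rfl fun i _ => ?_
      rw [hnuZ ω (τ - (i : ℕ)) (by omega)]
    show (2 * ∑ t ∈ Finset.Ioc s e,
        nu (Z ω) t * (∑ i : Fin d, (w i - (Z ω).1.1 i) * (x (t - (i : ℕ)) + nu (Z ω) (t - (i : ℕ))))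
      - 2 * k * σ ^ 2 * (w ⟨0, hd⟩ - (Z ω).1.1 ⟨0, hd⟩)
      - ((k : ℝ) - d + 1) * σ ^ 2 * ∑ i : Fin d, (w i - (Z ω).1.1 i) ^ 2
      + ∑ τ ∈ Finset.Icc (s + d) e,
          (∑ i : Fin d, (w i - (Z ω).1.1 i) * (x (τ - (i : ℕ)) + nu (Z ω) (τ - (i : ℕ)))) ^ 2) = _
    rw [Finset.sum_congr rfl h1, Finset.sum_congr rfl h2]
  -- independence and product structure
  have hIndepPM : IndepFun P Mf μ := by
    have hdisj : Disjoint (Finset.Icc 0 s) (Finset.Ioc s e) := by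
      rw [Finset.disjoint_left]
      intro a ha hb
      simp only [Finset.mem_Icc] at ha
      simp only [Finset.mem_Ioc] at hb
      omega
    exact iIndepFun.indepFun_finset _ _ hdisj hindep hmeas
  have hIndepQM : IndepFun (fun ω => (W ω, P ω)) Mf μ := by
    have hle : MeasurableSpace.comap (fun ω => (W ω, P ω)) inferInstance ≤
        MeasurableSpace.comap P inferInstance :=
      Measurable.comap_le (Measurable.prodMk hW (comap_measurable P))
    exact indep_of_indep_of_le_left hIndepPM hle
  have hmapZ : μ.map Z = (μ.map fun ω => (W ω, P ω)).prod (μ.map Mf) :=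
    (indepFun_iff_map_prod_eq_prod_map_map hQmeas.aemeasurable hMmeas.aemeasurable).mp hIndepQM
  have hFZint : Integrable (fun ω => F (Z ω)) μ :=
    hΦint.congr (Filter.Eventually.of_forall fun ω => (hFZ ω).symm)
  have hFint : Integrable F (μ.map Z) :=
    (integrable_map_measure hF.aestronglyMeasurable hZmeas.aemeasurable).mpr hFZint
  have step1 : ∫ ω, Φ ω ∂μ = ∫ z, F z ∂(μ.map Z) := by
    rw [integral_map hZmeas.aemeasurable hF.aestronglyMeasurable]
    exact integral_congr_ae (Filter.Eventually.of_forall fun ω => (hFZ ω).symm)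
  rw [step1, hmapZ, MeasureTheory.integral_prod F (hmapZ ▸ hFint)]
  refine integral_nonneg fun a => ?_
  simp only [Pi.zero_apply]
  have hFa : Measurable fun y => F (a, y) := hF.comp measurable_prodMk_left
  rw [MeasureTheory.integral_map hMmeas.aemeasurable hFa.aestronglyMeasurable]
  -- notation for the fixed filter value
  -- dichotomy for the substituted noise
  have hζ : ∀ j : ℕ, (j ∈ Finset.Ioc s e ∧ ∀ ω, nu (a, Mf ω) j = n j ω) ∨
      (j ∉ Finset.Ioc s e ∧ ∃ r : ℝ, ∀ ω, nu (a, Mf ω) j = r) := by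
    intro j
    by_cases h' : j ∈ Finset.Ioc s e
    · left
      refine ⟨h', fun ω => ?_⟩
      have h : j ∉ Finset.Icc 0 s := by
        simp only [Finset.mem_Ioc] at h'
        simp only [Finset.mem_Icc]
        omega
      simp only [nu, dif_neg h, dif_pos h']
      rfl
    · right
      refine ⟨h', ?_⟩
      by_cases h : j ∈ Finset.Icc 0 s
      · exact ⟨a.2 ⟨j, h⟩, fun ω => by simp only [nu, dif_pos h]⟩
      · exact ⟨0, fun ω => by simp only [nu, dif_neg h, dif_neg h']⟩
  have hζω : ∀ j ∈ Finset.Ioc s e, ∀ ω, nu (a, Mf ω) j = n j ω := by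
    intro j hj ω
    rcases hζ j with ⟨_, h⟩ | ⟨hn, _⟩
    · exact h ω
    · exact absurd hj hn
  -- product of a block noise with a substituted noise
  have hbase : ∀ t ∈ Finset.Ioc s e, ∀ j : ℕ,
      Integrable (fun ω => n t ω * nu (a, Mf ω) j) μ ∧
      (∫ ω, n t ω * nu (a, Mf ω) j ∂μ) = if j = t then σ ^ 2 else 0 := by
    intro t ht j
    rcases hζ j with ⟨hj, hval⟩ | ⟨hj, r, hval⟩
    · have h1 : (fun ω => n t ω * nu (a, Mf ω) j) = fun ω => n t ω * n j ω :=
        funext fun ω => by rw [hval ω]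
      rw [h1]
      obtain ⟨hI, hV⟩ := hprod t ht j hj
      refine ⟨hI, ?_⟩
      rw [hV]
      by_cases htj : t = j
      · rw [if_pos htj, if_pos htj.symm]
      · rw [if_neg htj, if_neg fun hh => htj hh.symm]
    · have h1 : (fun ω => n t ω * nu (a, Mf ω) j) = fun ω => n t ω * r :=
        funext fun ω => by rw [hval ω]
      rw [h1]
      have hjt : j ≠ t := fun h => hj (h ▸ ht)
      refine ⟨(hL1 t ht).mul_const r, ?_⟩
      rw [integral_mul_const, hmean t, zero_mul, if_neg hjt]
  -- per-time, per-coordinate term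
  have hti : ∀ t ∈ Finset.Ioc s e, ∀ i : Fin d,
      Integrable (fun ω => (w i - a.1 i) * (n t ω * (x (t - (i : ℕ)) + nu (a, Mf ω) (t - (i : ℕ))))) μ ∧
      (∫ ω, (w i - a.1 i) * (n t ω * (x (t - (i : ℕ)) + nu (a, Mf ω) (t - (i : ℕ)))) ∂μ)
        = (w i - a.1 i) * (if (i : ℕ) = 0 then σ ^ 2 else 0) := by
    intro t ht i
    have hsplit : (fun ω => n t ω * (x (t - (i : ℕ)) + nu (a, Mf ω) (t - (i : ℕ))))
        = fun ω => x (t - (i : ℕ)) * n t ω + n t ω * nu (a, Mf ω) (t - (i : ℕ)) :=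
      funext fun ω => by ring
    have hint : Integrable (fun ω => n t ω * (x (t - (i : ℕ)) + nu (a, Mf ω) (t - (i : ℕ)))) μ := by
      rw [hsplit]
      exact ((hL1 t ht).const_mul _).add (hbase t ht _).1
    have hval : (∫ ω, n t ω * (x (t - (i : ℕ)) + nu (a, Mf ω) (t - (i : ℕ))) ∂μ)
        = if (i : ℕ) = 0 then σ ^ 2 else 0 := by
      rw [hsplit, integral_add ((hL1 t ht).const_mul _) (hbase t ht _).1,
        integral_const_mul, hmean t, mul_zero, zero_add, (hbase t ht (t - (i : ℕ))).2]
      have hiff : (t - (i : ℕ) = t) ↔ ((i : ℕ) = 0) := by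
        simp only [Finset.mem_Ioc] at ht
        omega
      by_cases h0 : (i : ℕ) = 0
      · rw [if_pos (hiff.mpr h0), if_pos h0]
      · rw [if_neg (fun hh => h0 (hiff.mp hh)), if_neg h0]
    exact ⟨hint.const_mul _, by rw [integral_const_mul, hval]⟩
  -- per-time sums
  have hg : ∀ t ∈ Finset.Ioc s e, Integrable
      (fun ω => ∑ i : Fin d, (w i - a.1 i) * (n t ω * (x (t - (i : ℕ)) + nu (a, Mf ω) (t - (i : ℕ))))) μ :=
    fun t ht => integrable_finset_sum _ fun i _ => (hti t ht i).1
  have hgval : ∀ t ∈ Finset.Ioc s e,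
      (∫ ω, ∑ i : Fin d, (w i - a.1 i) * (n t ω * (x (t - (i : ℕ)) + nu (a, Mf ω) (t - (i : ℕ)))) ∂μ)
        = (w ⟨0, hd⟩ - a.1 ⟨0, hd⟩) * σ ^ 2 := by
    intro t ht
    rw [integral_finset_sum _ fun i _ => (hti t ht i).1,
      Finset.sum_congr rfl fun i _ => (hti t ht i).2]
    calc ∑ i : Fin d, (w i - a.1 i) * (if (i : ℕ) = 0 then σ ^ 2 else 0)
        = ∑ i : Fin d, (if i = (⟨0, hd⟩ : Fin d) then (w i - a.1 i) * σ ^ 2 else 0) := by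
          refine Finset.sum_congr rfl fun i _ => ?_
          by_cases h0 : i = (⟨0, hd⟩ : Fin d)
          · rw [if_pos h0, if_pos (by rw [h0])]
          · rw [if_neg h0, if_neg (fun hh => h0 (Fin.ext hh)), mul_zero]
      _ = (w ⟨0, hd⟩ - a.1 ⟨0, hd⟩) * σ ^ 2 := by simp
  -- the quadratic part
  have hh : ∀ τ ∈ Finset.Icc (s + d) e,
      Integrable (fun ω => ((∑ i : Fin d, (w i - a.1 i) * x (τ - (i : ℕ)))
        + ∑ i : Fin d, (w i - a.1 i) * n (τ - (i : ℕ)) ω) ^ 2) μ ∧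
      (∫ ω, ((∑ i : Fin d, (w i - a.1 i) * x (τ - (i : ℕ)))
        + ∑ i : Fin d, (w i - a.1 i) * n (τ - (i : ℕ)) ω) ^ 2 ∂μ)
        = (∑ i : Fin d, (w i - a.1 i) * x (τ - (i : ℕ))) ^ 2
          + σ ^ 2 * ∑ i : Fin d, (w i - a.1 i) ^ 2 := by
    intro τ hτ
    have hτidx : ∀ i : Fin d, τ - (i : ℕ) ∈ Finset.Ioc s e := by
      intro i
      have hlt := i.isLt
      simp only [Finset.mem_Icc] at hτ
      simp only [Finset.mem_Ioc]
      omega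
    set K := ∑ i : Fin d, (w i - a.1 i) * x (τ - (i : ℕ)) with hK
    have hLint : Integrable (fun ω => ∑ i : Fin d, (w i - a.1 i) * n (τ - (i : ℕ)) ω) μ :=
      integrable_finset_sum _ fun i _ => (hL1 _ (hτidx i)).const_mul _
    have hLval : (∫ ω, ∑ i : Fin d, (w i - a.1 i) * n (τ - (i : ℕ)) ω ∂μ) = 0 := by
      rw [integral_finset_sum _ fun i _ => (hL1 _ (hτidx i)).const_mul _]
      refine Finset.sum_eq_zero fun i _ => ?_
      rw [integral_const_mul, hmean, mul_zero]
    have hLsq : (fun ω => (∑ i : Fin d, (w i - a.1 i) * n (τ - (i : ℕ)) ω) ^ 2)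
        = fun ω => ∑ i : Fin d, ∑ j : Fin d,
            ((w i - a.1 i) * (w j - a.1 j)) * (n (τ - (i : ℕ)) ω * n (τ - (j : ℕ)) ω) := by
      funext ω
      rw [sq, Finset.sum_mul_sum]
      exact Finset.sum_congr rfl fun i _ => Finset.sum_congr rfl fun j _ => by ring
    have hL2int : Integrable (fun ω => (∑ i : Fin d, (w i - a.1 i) * n (τ - (i : ℕ)) ω) ^ 2) μ := by
      rw [hLsq]
      exact integrable_finset_sum _ fun i _ => integrable_finset_sum _ fun j _ =>
        ((hprod _ (hτidx i) _ (hτidx j)).1).const_mul _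
    have hL2val : (∫ ω, (∑ i : Fin d, (w i - a.1 i) * n (τ - (i : ℕ)) ω) ^ 2 ∂μ)
        = σ ^ 2 * ∑ i : Fin d, (w i - a.1 i) ^ 2 := by
      rw [hLsq, integral_finset_sum _ fun i _ => integrable_finset_sum _ fun j _ =>
        ((hprod _ (hτidx i) _ (hτidx j)).1).const_mul _]
      have h1 : ∀ i : Fin d, (∫ ω, ∑ j : Fin d,
          ((w i - a.1 i) * (w j - a.1 j)) * (n (τ - (i : ℕ)) ω * n (τ - (j : ℕ)) ω) ∂μ)
          = (w i - a.1 i) * (w i - a.1 i) * σ ^ 2 := by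
        intro i
        rw [integral_finset_sum _ fun j _ => ((hprod _ (hτidx i) _ (hτidx j)).1).const_mul _]
        have h2 : ∀ j : Fin d, (∫ ω, ((w i - a.1 i) * (w j - a.1 j))
            * (n (τ - (i : ℕ)) ω * n (τ - (j : ℕ)) ω) ∂μ)
            = if j = i then (w i - a.1 i) * (w j - a.1 j) * σ ^ 2 else 0 := by
          intro j
          rw [integral_const_mul, (hprod _ (hτidx i) _ (hτidx j)).2]
          have hiff : (τ - (i : ℕ) = τ - (j : ℕ)) ↔ (j = i) := by
            rw [Fin.ext_iff]
            have hi := i.isLt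
            have hj := j.isLt
            simp only [Finset.mem_Icc] at hτ
            omega
          by_cases h0 : j = i
          · rw [if_pos (hiff.mpr h0), if_pos h0]
          · rw [if_neg (fun hh => h0 (hiff.mp hh)), if_neg h0, mul_zero]
        rw [Finset.sum_congr rfl fun j _ => h2 j]
        simp
      rw [Finset.sum_congr rfl fun i _ => h1 i, Finset.mul_sum]
      exact Finset.sum_congr rfl fun i _ => by ring
    have hptw : (fun ω => (K + ∑ i : Fin d, (w i - a.1 i) * n (τ - (i : ℕ)) ω) ^ 2)
        = fun ω => K ^ 2 + (2 * K) * (∑ i : Fin d, (w i - a.1 i) * n (τ - (i : ℕ)) ω)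
            + (∑ i : Fin d, (w i - a.1 i) * n (τ - (i : ℕ)) ω) ^ 2 :=
      funext fun ω => by ring
    have hA : Integrable (fun ω => K ^ 2 + 2 * K * ∑ i : Fin d, (w i - a.1 i) * n (τ - (i : ℕ)) ω) μ :=
      (integrable_const _).add (hLint.const_mul _)
    constructor
    · rw [hptw]
      exact hA.add hL2int
    · rw [hptw, integral_add hA hL2int,
        integral_add (integrable_const _) (hLint.const_mul _),
        integral_const_mul, hLval, integral_const, hL2val]
      simp [measure_univ]
  -- pointwise decomposition of the inner integrand
  have hGdec : ∀ ω, F (a, Mf ω) =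
      2 * (∑ t ∈ Finset.Ioc s e, ∑ i : Fin d,
            (w i - a.1 i) * (n t ω * (x (t - (i : ℕ)) + nu (a, Mf ω) (t - (i : ℕ)))))
        - 2 * k * σ ^ 2 * (w ⟨0, hd⟩ - a.1 ⟨0, hd⟩)
        - ((k : ℝ) - d + 1) * σ ^ 2 * ∑ i : Fin d, (w i - a.1 i) ^ 2
        + ∑ τ ∈ Finset.Icc (s + d) e,
            ((∑ i : Fin d, (w i - a.1 i) * x (τ - (i : ℕ)))
              + ∑ i : Fin d, (w i - a.1 i) * n (τ - (i : ℕ)) ω) ^ 2 := by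
    intro ω
    have start : F (a, Mf ω) =
        2 * ∑ t ∈ Finset.Ioc s e, nu (a, Mf ω) t
            * (∑ i : Fin d, (w i - a.1 i) * (x (t - (i : ℕ)) + nu (a, Mf ω) (t - (i : ℕ))))
          - 2 * k * σ ^ 2 * (w ⟨0, hd⟩ - a.1 ⟨0, hd⟩)
          - ((k : ℝ) - d + 1) * σ ^ 2 * ∑ i : Fin d, (w i - a.1 i) ^ 2
          + ∑ τ ∈ Finset.Icc (s + d) e,
              (∑ i : Fin d, (w i - a.1 i) * (x (τ - (i : ℕ)) + nu (a, Mf ω) (τ - (i : ℕ)))) ^ 2 := rfl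
    rw [start]
    have h1 : ∀ t ∈ Finset.Ioc s e,
        nu (a, Mf ω) t * (∑ i : Fin d, (w i - a.1 i) * (x (t - (i : ℕ)) + nu (a, Mf ω) (t - (i : ℕ))))
        = ∑ i : Fin d, (w i - a.1 i) * (n t ω * (x (t - (i : ℕ)) + nu (a, Mf ω) (t - (i : ℕ)))) := by
      intro t ht
      rw [hζω t ht ω, Finset.mul_sum]
      exact Finset.sum_congr rfl fun i _ => by ring
    have h2 : ∀ τ ∈ Finset.Icc (s + d) e,
        (∑ i : Fin d, (w i - a.1 i) * (x (τ - (i : ℕ)) + nu (a, Mf ω) (τ - (i : ℕ)))) ^ 2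
        = ((∑ i : Fin d, (w i - a.1 i) * x (τ - (i : ℕ)))
            + ∑ i : Fin d, (w i - a.1 i) * n (τ - (i : ℕ)) ω) ^ 2 := by
      intro τ hτ
      have hτidx : ∀ i : Fin d, τ - (i : ℕ) ∈ Finset.Ioc s e := by
        intro i
        have hlt := i.isLt
        simp only [Finset.mem_Icc] at hτ
        simp only [Finset.mem_Ioc]
        omega
      congr 1
      rw [← Finset.sum_add_distrib]
      refine Finset.sum_congr rfl fun i _ => ?_
      rw [hζω _ (hτidx i) ω]
      ring
    rw [Finset.sum_congr rfl h1, Finset.sum_congr rfl h2]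
  have hS1 : Integrable (fun ω => ∑ t ∈ Finset.Ioc s e, ∑ i : Fin d,
      (w i - a.1 i) * (n t ω * (x (t - (i : ℕ)) + nu (a, Mf ω) (t - (i : ℕ))))) μ :=
    integrable_finset_sum _ fun t ht => hg t ht
  have hS2 : Integrable (fun ω => ∑ τ ∈ Finset.Icc (s + d) e,
      ((∑ i : Fin d, (w i - a.1 i) * x (τ - (i : ℕ)))
        + ∑ i : Fin d, (w i - a.1 i) * n (τ - (i : ℕ)) ω) ^ 2) μ :=
    integrable_finset_sum _ fun τ hτ => (hh τ hτ).1
  have hS1' : Integrable (fun ω => 2 * (∑ t ∈ Finset.Ioc s e, ∑ i : Fin d,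
      (w i - a.1 i) * (n t ω * (x (t - (i : ℕ)) + nu (a, Mf ω) (t - (i : ℕ)))))
      - 2 * k * σ ^ 2 * (w ⟨0, hd⟩ - a.1 ⟨0, hd⟩)
      - ((k : ℝ) - d + 1) * σ ^ 2 * ∑ i : Fin d, (w i - a.1 i) ^ 2) μ :=
    ((hS1.const_mul 2).sub (integrable_const _)).sub (integrable_const _)
  have hB1 : Integrable (fun ω => 2 * (∑ t ∈ Finset.Ioc s e, ∑ i : Fin d,
      (w i - a.1 i) * (n t ω * (x (t - (i : ℕ)) + nu (a, Mf ω) (t - (i : ℕ)))))) μ :=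
    hS1.const_mul 2
  have hB2 : Integrable (fun ω => 2 * (∑ t ∈ Finset.Ioc s e, ∑ i : Fin d,
      (w i - a.1 i) * (n t ω * (x (t - (i : ℕ)) + nu (a, Mf ω) (t - (i : ℕ)))))
      - 2 * k * σ ^ 2 * (w ⟨0, hd⟩ - a.1 ⟨0, hd⟩)) μ := hB1.sub (integrable_const _)
  have e1 : ∫ ω, F (a, Mf ω) ∂μ = ∑ τ ∈ Finset.Icc (s + d) e,
      (∑ i : Fin d, (w i - a.1 i) * x (τ - (i : ℕ))) ^ 2 := by
    rw [integral_congr_ae (Filter.Eventually.of_forall hGdec), integral_add hS1' hS2,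
      integral_sub hB2 (integrable_const _),
      integral_sub hB1 (integrable_const _), integral_const_mul,
      integral_const, integral_const,
      integral_finset_sum _ fun t ht => hg t ht,
      integral_finset_sum _ fun τ hτ => (hh τ hτ).1,
      Finset.sum_congr rfl fun t ht => hgval t ht,
      Finset.sum_congr rfl fun τ hτ => (hh τ hτ).2,
      Finset.sum_const, Finset.sum_add_distrib, Finset.sum_const]
    have hc1 : (Finset.Ioc s e).card = k := by
      rw [Nat.card_Ioc]
      omega
    have hc2 : (Finset.Icc (s + d) e).card = k + 1 - d := by
      rw [Nat.card_Icc]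
      omega
    rw [hc1, hc2, nsmul_eq_mul, nsmul_eq_mul]
    have hc3 : ((k + 1 - d : ℕ) : ℝ) = (k : ℝ) - d + 1 := by
      have hdk1 : d ≤ k + 1 := by omega
      push_cast [hdk1]
      ring
    rw [hc3]
    simp only [measure_univ, ENNReal.toReal_one, smul_eq_mul, one_mul, probReal_univ]
    ring
  rw [e1]
  exact Finset.sum_nonneg fun τ _ => sq_nonneg _
open MeasureTheory ProbabilityTheory Finset in
/-- Reduction to block losses: if a filter w_c is used throughout block c and is
measurable with respect to the noise up to the end of block c−1, then the expected
true regret is bounded by the expected regret on the surrogate block losses L^k. -/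
theorem true_regret_le_block_loss_regret
    {Ω : Type*} [MeasurableSpace Ω] (μ : Measure Ω) [IsProbabilityMeasure μ]
    (n : ℕ → Ω → ℝ) (hmeas : ∀ t, Measurable (n t))
    (hindep : iIndepFun n μ)
    (σ : ℝ) (hmean : ∀ t, ∫ ω, n t ω ∂μ = 0)
    (hvar : ∀ t, ∫ ω, (n t ω) ^ 2 ∂μ = σ ^ 2)
    (x : ℕ → ℝ) (B_X : ℝ) (hx : ∀ t, |x t| ≤ B_X)
    (y : ℕ → Ω → ℝ) (hy : ∀ t ω, y t ω = x t + n t ω)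
    (d k b T : ℕ) (hd : 0 < d) (hdk : d ≤ k) (hT : T = b * k)
    (Y : ℕ → Ω → Fin d → ℝ) (hY : ∀ t ω i, Y t ω i = y (t - (i : ℕ)) ω)
    (l lhat : ℕ → (Fin d → ℝ) → Ω → ℝ)
    (hl : ∀ t w ω, l t w ω = (x t - ∑ i, w i * Y t ω i) ^ 2)
    (hlhat : ∀ t w ω,
      lhat t w ω = (y t ω - ∑ i, w i * Y t ω i) ^ 2 + 2 * σ ^ 2 * w ⟨0, hd⟩)
    (wblk : ℕ → Ω → Fin d → ℝ)  -- the filter used throughout block c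
    (hwblkmeas : ∀ c, @Measurable Ω (Fin d → ℝ)
      (MeasurableSpace.comap (fun ω => (fun i : Fin ((c - 1) * k) => n ((i : ℕ) + 1) ω))
        inferInstance) _ (wblk c))
    (wt : ℕ → Ω → Fin d → ℝ)
    (hwt : ∀ c ∈ Icc 1 b, ∀ t ∈ Icc ((c - 1) * k + 1) (c * k), wt t = wblk c)
    (Lk : ℕ → (Fin d → ℝ) → Ω → ℝ)
    (hLk : ∀ c w ω, Lk c w ω =
      (∑ t ∈ Icc ((c - 1) * k + 1) (c * k), lhat t w ω) +
      (((k : ℝ) - d + 1) * σ ^ 2 * ∑ i, (w i - wblk c ω i) ^ 2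
        - ∑ τ ∈ Icc ((c - 1) * k + d) (c * k), (∑ i, (w i - wblk c ω i) * Y τ ω i) ^ 2))
    (w : Fin d → ℝ)
    (hint1 : ∀ t, Integrable (fun ω => l t (wt t ω) ω) μ)
    (hint2 : ∀ t, Integrable (fun ω => l t w ω) μ)
    (hint3 : ∀ c, Integrable (fun ω => Lk c (wblk c ω) ω) μ)
    (hint4 : ∀ c, Integrable (fun ω => Lk c w ω) μ) :
    ∫ ω, ∑ t ∈ Icc 1 T, (l t (wt t ω) ω - l t w ω) ∂μ ≤
    ∫ ω, ∑ c ∈ Icc 1 b, (Lk c (wblk c ω) ω - Lk c w ω) ∂μ := by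
  classical
  have hwmeas : ∀ c, Measurable (wblk c) := by
    intro c
    have hP : Measurable (fun ω => (fun i : Fin ((c - 1) * k) => n ((i : ℕ) + 1) ω)) :=
      measurable_pi_lambda _ fun i => hmeas _
    exact (hwblkmeas c).mono hP.comap_le le_rfl
  have hymeas : ∀ t, Measurable (y t) := by
    intro t
    have hyt : y t = fun ω => x t + n t ω := funext fun ω => hy t ω
    rw [hyt]; exact measurable_const.add (hmeas t)
  have hYmeas : ∀ (t : ℕ) (i : Fin d), Measurable (fun ω => Y t ω i) := by
    intro t i
    have hYt : (fun ω => Y t ω i) = y (t - (i : ℕ)) := funext fun ω => hY t ω i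
    rw [hYt]; exact hymeas _
  -- per-block inequality
  have hblock : ∀ c ∈ Finset.Icc 1 b,
      ∑ t ∈ Finset.Ioc ((c - 1) * k) (c * k), ∫ ω, (l t (wt t ω) ω - l t w ω) ∂μ
        ≤ ∫ ω, (Lk c (wblk c ω) ω - Lk c w ω) ∂μ := by
    intro c hc
    simp only [Finset.mem_Icc] at hc
    have hck : c * k = (c - 1) * k + k := by
      have h1 : c - 1 + 1 = c := by omega
      calc c * k = ((c - 1) + 1) * k := by rw [h1]
        _ = (c - 1) * k + k := by ring
    rw [hck]
    have hwtc : ∀ t ∈ Finset.Ioc ((c - 1) * k) ((c - 1) * k + k), wt t = wblk c := by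
      intro t ht
      simp only [Finset.mem_Ioc] at ht
      refine hwt c (Finset.mem_Icc.mpr ⟨hc.1, hc.2⟩) t (Finset.mem_Icc.mpr ?_)
      rw [hck]
      omega
    have hint1' : ∀ t ∈ Finset.Ioc ((c - 1) * k) ((c - 1) * k + k),
        Integrable (fun ω => l t (wblk c ω) ω) μ := by
      intro t ht
      have h := hint1 t
      rw [hwtc t ht] at h
      exact h
    -- measurability of the filtered prediction
    have hWc : @Measurable Ω (Fin d → ℝ)
        (MeasurableSpace.comap
          (fun ω (j : ↥(Finset.Icc 0 ((c - 1) * k))) => n (j : ℕ) ω) inferInstance) _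
        (wblk c) := by
      refine (hwblkmeas c).mono ?_ le_rfl
      have hπ : Measurable (fun (p : ↥(Finset.Icc 0 ((c - 1) * k)) → ℝ)
          (i : Fin ((c - 1) * k)) => p ⟨(i : ℕ) + 1, by
            simp only [Finset.mem_Icc]
            exact ⟨Nat.zero_le _, i.isLt⟩⟩) :=
        measurable_pi_lambda _ fun i => measurable_pi_apply _
      have hcomp : (fun ω => (fun i : Fin ((c - 1) * k) => n ((i : ℕ) + 1) ω)) =
          (fun (p : ↥(Finset.Icc 0 ((c - 1) * k)) → ℝ) (i : Fin ((c - 1) * k)) =>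
            p ⟨(i : ℕ) + 1, by
              simp only [Finset.mem_Icc]
              exact ⟨Nat.zero_le _, i.isLt⟩⟩)
          ∘ (fun ω (j : ↥(Finset.Icc 0 ((c - 1) * k))) => n (j : ℕ) ω) := rfl
      rw [hcomp, ← MeasurableSpace.comap_comp]
      exact MeasurableSpace.comap_mono hπ.comap_le
    -- L² of the block noise
    have hL2blk : ∀ j ∈ Finset.Ioc ((c - 1) * k) ((c - 1) * k + k),
        Integrable (fun ω => n j ω ^ 2) μ := by
      by_cases hσ : σ = 0
      · intro j hj
        have hjmem : j ∈ Finset.Icc ((c - 1) * k + 1) (c * k) := by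
          simp only [Finset.mem_Ioc] at hj
          rw [Finset.mem_Icc, hck]
          omega
        have hSmeas : Measurable (fun ω => ∑ i, wblk c ω i * Y j ω i) :=
          Finset.measurable_sum _ fun i _ =>
            ((measurable_pi_apply i).comp (hwmeas c)).mul (hYmeas j i)
        have hc2 : Integrable (fun ω => (y j ω - ∑ i, wblk c ω i * Y j ω i) ^ 2) μ := by
          refine Integrable.mono' (hint3 c)
            (((hymeas j).sub hSmeas).pow_const 2).aestronglyMeasurable
            (Filter.Eventually.of_forall fun ω => ?_)
          have hLkval : Lk c (wblk c ω) ω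
              = ∑ t ∈ Finset.Icc ((c - 1) * k + 1) (c * k),
                  (y t ω - ∑ i, wblk c ω i * Y t ω i) ^ 2 := by
            rw [hLk]
            simp only [hσ, sub_self, ne_eq, OfNat.ofNat_ne_zero, not_false_eq_true,
              zero_pow, mul_zero, zero_mul, Finset.sum_const_zero, sub_zero, add_zero]
            exact Finset.sum_congr rfl fun t _ => by rw [hlhat]; simp [hσ]
          rw [hLkval, Real.norm_eq_abs, abs_of_nonneg (sq_nonneg _)]
          exact Finset.single_le_sum
            (f := fun t => (y t ω - ∑ i, wblk c ω i * Y t ω i) ^ 2)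
            (fun t _ => sq_nonneg _) hjmem
        have ha2 : Integrable (fun ω => (x j - ∑ i, wblk c ω i * Y j ω i) ^ 2) μ := by
          have h1 : (fun ω => l j (wt j ω) ω)
              = fun ω => (x j - ∑ i, wblk c ω i * Y j ω i) ^ 2 := by
            funext ω
            rw [hwtc j hj, hl]
          have h := hint1 j
          rw [h1] at h
          exact h
        refine Integrable.mono' ((hc2.const_mul 2).add (ha2.const_mul 2))
          ((hmeas j).pow_const 2).aestronglyMeasurable
          (Filter.Eventually.of_forall fun ω => ?_)
        have hnd : n j ω = (y j ω - ∑ i, wblk c ω i * Y j ω i)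
            - (x j - ∑ i, wblk c ω i * Y j ω i) := by
          rw [hy]; ring
        rw [Real.norm_eq_abs, abs_of_nonneg (sq_nonneg _), hnd]
        simp only [Pi.add_apply]
        nlinarith [sq_nonneg ((y j ω - ∑ i, wblk c ω i * Y j ω i)
          + (x j - ∑ i, wblk c ω i * Y j ω i))]
      · intro j _
        by_contra hI
        have h0 := integral_undef hI
        have h1 : σ ^ 2 = 0 := (hvar j).symm.trans h0
        exact hσ (pow_eq_zero_iff two_ne_zero |>.mp h1)
    -- the pointwise identity
    have hIc : Finset.Icc ((c - 1) * k + 1) (c * k)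
        = Finset.Ioc ((c - 1) * k) ((c - 1) * k + k) := by
      rw [hck]
      ext a
      simp only [Finset.mem_Icc, Finset.mem_Ioc]
      omega
    have hIc2 : Finset.Icc ((c - 1) * k + d) (c * k)
        = Finset.Icc ((c - 1) * k + d) ((c - 1) * k + k) := by rw [hck]
    have hΦeq : ∀ ω,
        (Lk c (wblk c ω) ω - Lk c w ω)
          - ∑ t ∈ Finset.Ioc ((c - 1) * k) ((c - 1) * k + k), (l t (wblk c ω) ω - l t w ω) =
        2 * ∑ t ∈ Finset.Ioc ((c - 1) * k) ((c - 1) * k + k),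
            n t ω * (∑ i : Fin d, (w i - wblk c ω i) * (x (t - (i : ℕ)) + n (t - (i : ℕ)) ω))
          - 2 * k * σ ^ 2 * (w ⟨0, hd⟩ - wblk c ω ⟨0, hd⟩)
          - ((k : ℝ) - d + 1) * σ ^ 2 * ∑ i : Fin d, (w i - wblk c ω i) ^ 2
          + ∑ τ ∈ Finset.Icc ((c - 1) * k + d) ((c - 1) * k + k),
              (∑ i : Fin d, (w i - wblk c ω i) * (x (τ - (i : ℕ)) + n (τ - (i : ℕ)) ω)) ^ 2 := by
      intro ω
      have hYeq : ∀ (t : ℕ) (g : Fin d → ℝ),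
          ∑ i, g i * Y t ω i = ∑ i, g i * (x (t - (i : ℕ)) + n (t - (i : ℕ)) ω) :=
        fun t g => Finset.sum_congr rfl fun i _ => by rw [hY, hy]
      have hregzero : ((k : ℝ) - d + 1) * σ ^ 2
            * ∑ i, (wblk c ω i - wblk c ω i) ^ 2
          - ∑ τ ∈ Finset.Icc ((c - 1) * k + d) (c * k),
              (∑ i, (wblk c ω i - wblk c ω i) * Y τ ω i) ^ 2 = 0 := by
        simp [sub_self]
      rw [hLk c (wblk c ω) ω, hLk c w ω, hregzero, add_zero, hIc, hIc2]
      have hper : ∀ t ∈ Finset.Ioc ((c - 1) * k) ((c - 1) * k + k),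
          lhat t (wblk c ω) ω - lhat t w ω - (l t (wblk c ω) ω - l t w ω)
          = 2 * (n t ω * (∑ i : Fin d,
              (w i - wblk c ω i) * (x (t - (i : ℕ)) + n (t - (i : ℕ)) ω)))
            - 2 * σ ^ 2 * (w ⟨0, hd⟩ - wblk c ω ⟨0, hd⟩) := by
        intro t _
        rw [hlhat t (wblk c ω) ω, hlhat t w ω, hl t (wblk c ω) ω, hl t w ω, hy t ω,
          hYeq t (wblk c ω), hYeq t w]
        have hsplit : ∑ i : Fin d, (w i - wblk c ω i) * (x (t - (i : ℕ)) + n (t - (i : ℕ)) ω)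
            = (∑ i : Fin d, w i * (x (t - (i : ℕ)) + n (t - (i : ℕ)) ω))
              - ∑ i : Fin d, wblk c ω i * (x (t - (i : ℕ)) + n (t - (i : ℕ)) ω) := by
          rw [← Finset.sum_sub_distrib]
          exact Finset.sum_congr rfl fun i _ => by ring
        rw [hsplit]
        ring
      have hτQ : ∀ τ ∈ Finset.Icc ((c - 1) * k + d) ((c - 1) * k + k),
          (∑ i, (w i - wblk c ω i) * Y τ ω i) ^ 2
          = (∑ i : Fin d, (w i - wblk c ω i) * (x (τ - (i : ℕ)) + n (τ - (i : ℕ)) ω)) ^ 2 :=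
        fun τ _ => by rw [hYeq τ _]
      have hstep : (∑ t ∈ Finset.Ioc ((c - 1) * k) ((c - 1) * k + k), lhat t (wblk c ω) ω)
          - (∑ t ∈ Finset.Ioc ((c - 1) * k) ((c - 1) * k + k), lhat t w ω
            + (((k : ℝ) - d + 1) * σ ^ 2 * ∑ i, (w i - wblk c ω i) ^ 2
              - ∑ τ ∈ Finset.Icc ((c - 1) * k + d) ((c - 1) * k + k),
                  (∑ i, (w i - wblk c ω i) * Y τ ω i) ^ 2))
          - ∑ t ∈ Finset.Ioc ((c - 1) * k) ((c - 1) * k + k), (l t (wblk c ω) ω - l t w ω)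
          = (∑ t ∈ Finset.Ioc ((c - 1) * k) ((c - 1) * k + k),
              (lhat t (wblk c ω) ω - lhat t w ω - (l t (wblk c ω) ω - l t w ω)))
            - ((k : ℝ) - d + 1) * σ ^ 2 * ∑ i, (w i - wblk c ω i) ^ 2
            + ∑ τ ∈ Finset.Icc ((c - 1) * k + d) ((c - 1) * k + k),
                (∑ i, (w i - wblk c ω i) * Y τ ω i) ^ 2 := by
        have e1 : ∑ t ∈ Finset.Ioc ((c - 1) * k) ((c - 1) * k + k),
            (lhat t (wblk c ω) ω - lhat t w ω - (l t (wblk c ω) ω - l t w ω))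
            = (∑ t ∈ Finset.Ioc ((c - 1) * k) ((c - 1) * k + k), lhat t (wblk c ω) ω)
              - (∑ t ∈ Finset.Ioc ((c - 1) * k) ((c - 1) * k + k), lhat t w ω)
              - ∑ t ∈ Finset.Ioc ((c - 1) * k) ((c - 1) * k + k),
                  (l t (wblk c ω) ω - l t w ω) := by
          rw [Finset.sum_sub_distrib, Finset.sum_sub_distrib]
        rw [e1]
        ring
      rw [hstep, Finset.sum_congr rfl hper, Finset.sum_congr rfl hτQ,
        Finset.sum_sub_distrib, Finset.sum_const, ← Finset.mul_sum]
      have hcard : (Finset.Ioc ((c - 1) * k) ((c - 1) * k + k)).card = k := by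
        rw [Nat.card_Ioc]
        omega
      rw [hcard, nsmul_eq_mul]
      ring
    -- apply the block lemma
    have h0 := block_integral_nonneg μ n hmeas hindep σ hmean hvar x d k ((c - 1) * k)
      hd hdk hL2blk (wblk c) hWc w
      (fun ω => (Lk c (wblk c ω) ω - Lk c w ω)
        - ∑ t ∈ Finset.Ioc ((c - 1) * k) ((c - 1) * k + k), (l t (wblk c ω) ω - l t w ω))
      (((hint3 c).sub (hint4 c)).sub
        (integrable_finset_sum _ fun t ht => (hint1' t ht).sub (hint2 t)))
      hΦeq
    have hdiffint : ∀ t ∈ Finset.Ioc ((c - 1) * k) ((c - 1) * k + k),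
        Integrable (fun ω => l t (wblk c ω) ω - l t w ω) μ :=
      fun t ht => (hint1' t ht).sub (hint2 t)
    have hintsum : Integrable
        (fun ω => ∑ t ∈ Finset.Ioc ((c - 1) * k) ((c - 1) * k + k),
          (l t (wblk c ω) ω - l t w ω)) μ :=
      integrable_finset_sum _ fun t ht => (hint1' t ht).sub (hint2 t)
    have hLkint : Integrable (fun ω => Lk c (wblk c ω) ω - Lk c w ω) μ :=
      (hint3 c).sub (hint4 c)
    have hsub := integral_sub hLkint hintsum
    have hgoal2 : ∀ t ∈ Finset.Ioc ((c - 1) * k) ((c - 1) * k + k),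
        ∫ ω, (l t (wt t ω) ω - l t w ω) ∂μ = ∫ ω, (l t (wblk c ω) ω - l t w ω) ∂μ := by
      intro t ht
      rw [hwtc t ht]
    rw [Finset.sum_congr rfl hgoal2, ← integral_finset_sum _ hdiffint]
    linarith [h0, hsub.symm.le]
  -- assemble
  have hIccIoc : Finset.Icc 1 T = Finset.Ioc 0 T := by
    ext a
    simp only [Finset.mem_Icc, Finset.mem_Ioc]
    omega
  have hd1 : ∀ t ∈ Finset.Icc 1 T, Integrable (fun ω => l t (wt t ω) ω - l t w ω) μ :=
    fun t _ => (hint1 t).sub (hint2 t)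
  have hd2 : ∀ c ∈ Finset.Icc 1 b, Integrable (fun ω => Lk c (wblk c ω) ω - Lk c w ω) μ :=
    fun c _ => (hint3 c).sub (hint4 c)
  rw [integral_finset_sum _ hd1, integral_finset_sum _ hd2,
    hIccIoc, hT, sum_Ioc_blocks (fun t => ∫ ω, (l t (wt t ω) ω - l t w ω) ∂μ) k b]
  exact Finset.sum_le_sum hblock
end

section
/- Let K = {w ∈ ℝ^d : ‖w‖ ≤ R} and let f₁,…,f_C : ℝ^d → ℝ be twice-differentiable functions that are each H-strongly-convex on K with gradients bounded by G in norm on K. Run projected online gradient descent: w₁ ∈ K arbitrary, w_{c+1} = Π_K(w_c − (1/(Hc))·∇f_c(w_c)). Then for every w ∈ K: ∑_{c=1}^C [f_c(w_c) − f_c(w)] ≤ (G²/(2H))·(1 + ln C). -/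
open RealInnerProductSpace

private lemma aux_taylor' {d : ℕ} (f : EuclideanSpace ℝ (Fin d) → ℝ) (hf : ContDiff ℝ 2 f)
    (H : ℝ) (x y : EuclideanSpace ℝ (Fin d))
    (hseg : ∀ t ∈ Set.Icc (0:ℝ) 1, H * ‖y - x‖ ^ 2 ≤
      fderiv ℝ (fun w => fderiv ℝ f w (y - x)) (x + t • (y - x)) (y - x)) :
    f x + ⟪gradient f x, y - x⟫ + H / 2 * ‖y - x‖ ^ 2 ≤ f y := by
  set v := y - x with hv
  set m := H * ‖v‖ ^ 2 with hm
  have hline : ∀ t : ℝ, HasDerivAt (fun t : ℝ => x + t • v) v t := by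
    intro t
    simpa using ((hasDerivAt_id t).smul_const v).const_add x
  have hfd : Differentiable ℝ f := hf.differentiable (by norm_num)
  set ψ : ℝ → ℝ := fun t => fderiv ℝ f (x + t • v) v with hψ
  have hφ : ∀ t : ℝ, HasDerivAt (fun t => f (x + t • v)) (ψ t) t := by
    intro t
    exact (hfd (x + t • v)).hasFDerivAt.comp_hasDerivAt t (hline t)
  have hg2 : ContDiff ℝ 1 (fun w => fderiv ℝ f w v) :=
    (hf.fderiv_right (le_refl _)).clm_apply contDiff_const
  have hψ' : ∀ t : ℝ, HasDerivAt ψ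
      (fderiv ℝ (fun w => fderiv ℝ f w v) (x + t • v) v) t := by
    intro t
    exact ((hg2.differentiable one_ne_zero) (x + t • v)).hasFDerivAt.comp_hasDerivAt t (hline t)
  set ρ : ℝ → ℝ := fun t => f (x + t • v) - m * t ^ 2 / 2 with hρ
  have hρ' : ∀ t : ℝ, HasDerivAt ρ (ψ t - m * t) t := by
    intro t
    have h := (hφ t).sub (((hasDerivAt_pow 2 t).const_mul m).div_const 2)
    refine h.congr_deriv ?_
    push_cast; ring
  have hcont : ContinuousOn ρ (Set.Icc 0 1) := fun t _ => ((hρ' t).continuousAt).continuousWithinAt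
  obtain ⟨c, hc, hceq⟩ := exists_hasDerivAt_eq_slope ρ (fun t => ψ t - m * t) one_pos hcont
    (fun t _ => hρ' t)
  have hmono : ψ 0 - m * 0 ≤ ψ c - m * c := by
    have hcont2 : ContinuousOn (fun t => ψ t - m * t) (Set.Icc 0 c) := fun t _ =>
      (((hψ' t).sub ((hasDerivAt_id t).const_mul m)).continuousAt).continuousWithinAt
    obtain ⟨c', hc', hceq'⟩ := exists_hasDerivAt_eq_slope (fun t => ψ t - m * t)
      (fun t => fderiv ℝ (fun w => fderiv ℝ f w v) (x + t • v) v - m) hc.1 hcont2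
      (fun t _ => by exact ((hψ' t).sub ((hasDerivAt_id t).const_mul m)).congr_deriv (by ring))
    have hb : 0 ≤ fderiv ℝ (fun w => fderiv ℝ f w v) (x + c' • v) v - m := by
      have := hseg c' ⟨le_of_lt hc'.1, le_of_lt (hc'.2.trans hc.2)⟩
      linarith
    rw [hceq'] at hb
    have hcpos : (0:ℝ) < c - 0 := by linarith [hc.1]
    have h2 := mul_nonneg hb hcpos.le
    rw [div_mul_cancel₀ _ (ne_of_gt hcpos)] at h2
    linarith
  have hψ0 : ψ 0 = ⟪gradient f x, v⟫ := by
    rw [hψ]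
    simp only [zero_smul, add_zero]
    rw [gradient]
    exact (InnerProductSpace.toDual_symm_apply).symm
  have hρ1 : ρ 1 = f y - m / 2 := by simp [hρ, hv]
  have hρ0 : ρ 0 = f x := by simp [hρ]
  rw [hρ1, hρ0] at hceq
  have : ψ c - m * c = f y - m / 2 - f x := by rw [hceq]; ring
  rw [hψ0] at hmono
  rw [hm] at *
  linarith

private lemma aux_proj_mem' {E : Type*} [NormedAddCommGroup E] [NormedSpace ℝ E]
    (R : ℝ) (hR : 0 < R) (v : E) : ‖(min 1 (R / ‖v‖)) • v‖ ≤ R := by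
  rcases eq_or_ne v 0 with h | h
  · simp [h, hR.le]
  have hv : 0 < ‖v‖ := norm_pos_iff.mpr h
  rw [norm_smul]
  rcases le_or_gt (R / ‖v‖) 1 with h1 | h1
  · rw [min_eq_right h1, Real.norm_eq_abs, abs_of_nonneg (by positivity)]
    rw [div_mul_cancel₀ _ (ne_of_gt hv)]
  · rw [min_eq_left h1.le]
    simp only [norm_one, one_mul]
    exact le_of_lt ((one_lt_div hv).mp h1)

private lemma aux_nonexp' {E : Type*} [NormedAddCommGroup E] [InnerProductSpace ℝ E]
    (R : ℝ) (hR : 0 < R) (u v : E) (hu : ‖u‖ ≤ R) :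
    ‖(min 1 (R / ‖v‖)) • v - u‖ ≤ ‖v - u‖ := by
  rcases le_or_gt ‖v‖ R with h | h
  · rcases eq_or_ne v 0 with h0 | h0
    · simp [h0]
    · have hv : 0 < ‖v‖ := norm_pos_iff.mpr h0
      rw [min_eq_left (by rw [le_div_iff₀ hv]; linarith)]
      simp
  · have hv : 0 < ‖v‖ := lt_trans hR h
    rw [min_eq_right (by rw [div_le_one hv]; linarith)]
    set s := R / ‖v‖ with hs
    have hip : ⟪v, u⟫ ≤ ‖v‖ * R := le_trans (real_inner_le_norm v u)
      (by nlinarith [norm_nonneg v])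
    have hsv : s * ‖v‖ = R := div_mul_cancel₀ _ (ne_of_gt hv)
    have key : ‖s • v - u‖ ^ 2 ≤ ‖v - u‖ ^ 2 := by
      rw [norm_sub_sq_real, norm_sub_sq_real, real_inner_smul_left, norm_smul,
        Real.norm_eq_abs, abs_of_nonneg (by positivity : (0:ℝ) ≤ s), mul_pow]
      have hs1 : s < 1 := by rw [hs, div_lt_one hv]; exact h
      have hs0 : 0 < s := by positivity
      nlinarith [sq_nonneg (‖v‖ - R)]
    exact (pow_le_pow_iff_left₀ (norm_nonneg _) (norm_nonneg _) two_ne_zero).mp key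

private lemma aux_harmonic' : ∀ C : ℕ, 1 ≤ C → ∑ c ∈ Finset.Icc 1 C, (1:ℝ)/c ≤ 1 + Real.log C := by
  intro C
  induction C with
  | zero => intro h; omega
  | succ n ih =>
    intro _
    rcases Nat.eq_zero_or_pos n with h | h
    · subst h; norm_num
    have hn : 1 ≤ n := h
    rw [Finset.sum_Icc_succ_top (by omega)]
    have hlog : (1:ℝ)/(n+1) ≤ Real.log (n+1) - Real.log n := by
      have hn0 : (0:ℝ) < n := by exact_mod_cast hn
      have hx : (0:ℝ) < (n:ℝ)/(n+1) := by positivity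
      have := Real.log_le_sub_one_of_pos hx
      rw [Real.log_div (ne_of_gt hn0) (by positivity)] at this
      have : Real.log n - Real.log (n+1) ≤ (n:ℝ)/(n+1) - 1 := this
      have heq : (n:ℝ)/(n+1) - 1 = -(1/(n+1)) := by field_simp; ring
      linarith [heq ▸ this]
    have := ih hn
    push_cast
    push_cast at this
    linarith

open Finset in
/-- Logarithmic regret of projected online gradient descent with step sizes
η_c = 1/(Hc) for H-strongly-convex losses with G-bounded gradients on the ball of
radius R: the regret after C rounds is at most (G²/(2H))·(1 + ln C). -/
theorem ogd_strongly_convex_log_regret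
    {d : ℕ} (R G H : ℝ) (hR : 0 < R) (hG : 0 ≤ G) (hH : 0 < H) (C : ℕ)
    (K : Set (EuclideanSpace ℝ (Fin d))) (hKdef : K = {w | ‖w‖ ≤ R})
    (f : ℕ → EuclideanSpace ℝ (Fin d) → ℝ)
    (hdiff : ∀ c, ContDiff ℝ 2 (f c))
    (hHess : ∀ c ∈ Icc 1 C, ∀ x ∈ K, ∀ v : EuclideanSpace ℝ (Fin d),
      H * ‖v‖ ^ 2 ≤ fderiv ℝ (fun y => (fderiv ℝ (f c) y) v) x v)
    (hgrad : ∀ c ∈ Icc 1 C, ∀ x ∈ K, ‖gradient (f c) x‖ ≤ G)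
    (proj : EuclideanSpace ℝ (Fin d) → EuclideanSpace ℝ (Fin d))
    (hproj : ∀ v, proj v = (min 1 (R / ‖v‖)) • v)
    (w : ℕ → EuclideanSpace ℝ (Fin d)) (hw1 : w 1 ∈ K)
    (hwrec : ∀ c, 1 ≤ c →
      w (c + 1) = proj (w c - (1 / (H * c)) • gradient (f c) (w c))) :
    ∀ wstar ∈ K, ∑ c ∈ Icc 1 C, (f c (w c) - f c wstar) ≤
      G ^ 2 / (2 * H) * (1 + Real.log C) := by
  intro wstar hwstar
  subst hKdef
  rcases Nat.eq_zero_or_pos C with hC0 | hC1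
  · subst hC0
    simp only [Icc_self, Nat.cast_zero, Real.log_zero]
    norm_num
    positivity
  -- K is convex
  have hK : Convex ℝ {w : EuclideanSpace ℝ (Fin d) | ‖w‖ ≤ R} := by
    have := convex_closedBall (0 : EuclideanSpace ℝ (Fin d)) R
    simpa [Metric.closedBall, dist_zero_right] using this
  -- iterates stay in K
  have hwK : ∀ c, 1 ≤ c → ‖w c‖ ≤ R := by
    intro c hc
    induction c with
    | zero => omega
    | succ n ih =>
      rcases Nat.eq_zero_or_pos n with h | h
      · subst h; exact hw1
      · rw [hwrec n h, hproj]
        exact aux_proj_mem' R hR _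
  -- shorthand
  set a : ℕ → ℝ := fun k => ‖w k - wstar‖ ^ 2 with ha
  set b : ℕ → ℝ := fun k => ((k:ℝ) - 1) * a k with hb
  -- per-step bound
  have hstep : ∀ c ∈ Icc 1 C, f c (w c) - f c wstar ≤
      H / 2 * (b c - b (c+1)) + G ^ 2 / (2 * H) * (1 / (c:ℝ)) := by
    intro c hc
    have hc1 : 1 ≤ c := (mem_Icc.mp hc).1
    have hcR : (1:ℝ) ≤ (c:ℝ) := by exact_mod_cast hc1
    have hcR0 : (0:ℝ) < (c:ℝ) := by linarith
    set g := gradient (f c) (w c) with hg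
    set η : ℝ := 1 / (H * c) with hη
    have hηpos : 0 < η := by positivity
    have hwcK : ‖w c‖ ≤ R := hwK c hc1
    -- strong convexity
    have hsc : f c (w c) + ⟪g, wstar - w c⟫ + H / 2 * ‖wstar - w c‖ ^ 2 ≤ f c wstar := by
      apply aux_taylor' (f c) (hdiff c) H (w c) wstar
      intro t ht
      exact hHess c hc _ (hK.add_smul_sub_mem hwcK hwstar ht) _
    -- descent inequality
    have hdesc : a (c+1) ≤ a c - 2 * η * ⟪g, w c - wstar⟫ + η^2 * ‖g‖^2 := by
      have hrec := hwrec c hc1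
      rw [hproj] at hrec
      have hne : ‖w (c+1) - wstar‖ ≤ ‖(w c - η • g) - wstar‖ := by
        rw [hrec]
        exact aux_nonexp' R hR wstar _ hwstar
      have hsq : ‖w (c+1) - wstar‖^2 ≤ ‖(w c - η • g) - wstar‖^2 :=
        pow_le_pow_left₀ (norm_nonneg _) hne 2
      have hexp : ‖(w c - η • g) - wstar‖^2 =
          a c - 2 * η * ⟪g, w c - wstar⟫ + η^2 * ‖g‖^2 := by
        have : (w c - η • g) - wstar = (w c - wstar) - η • g := by abel
        rw [this, norm_sub_sq_real, real_inner_smul_right, norm_smul,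
          Real.norm_eq_abs, abs_of_pos hηpos, mul_pow, real_inner_comm]
        ring
      rw [hexp] at hsq
      exact hsq
    -- gradient bound
    have hgb : ‖g‖^2 ≤ G^2 := by
      have := hgrad c hc _ (Set.mem_setOf.mpr hwcK)
      nlinarith [norm_nonneg g]
    set I := ⟪g, w c - wstar⟫ with hI
    have hi : f c (w c) - f c wstar ≤ I - H / 2 * a c := by
      have h1 : ⟪g, wstar - w c⟫ = -I := by
        rw [hI, ← inner_neg_right]
        congr 1
        abel
      have h2 : ‖wstar - w c‖ = ‖w c - wstar‖ := norm_sub_rev _ _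
      rw [h1, h2] at hsc
      simp only [ha]
      linarith
    -- combine
    have h1 : 2 * η * I ≤ a c - a (c+1) + η^2 * G^2 := by nlinarith [sq_nonneg η]
    have hfac : (0:ℝ) < H * (c:ℝ) / 2 := by positivity
    have h2 := mul_le_mul_of_nonneg_left h1 hfac.le
    have e1 : H * (c:ℝ) / 2 * (2 * η * I) = I := by
      rw [hη]; field_simp
    have e2 : H * (c:ℝ) / 2 * (a c - a (c+1) + η^2 * G^2) =
        H * (c:ℝ) / 2 * (a c - a (c+1)) + G^2 / (2*H) * (1/(c:ℝ)) := by
      rw [hη]; field_simp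
    rw [e1, e2] at h2
    have e3 : H / 2 * (b c - b (c+1)) =
        H * (c:ℝ) / 2 * (a c - a (c+1)) - H / 2 * a c := by
      simp only [hb]
      push_cast
      ring
    rw [e3]
    linarith
  -- sum everything
  have hsum := Finset.sum_le_sum hstep
  have htel : ∀ n : ℕ, 1 ≤ n → ∑ c ∈ Icc 1 n, (b c - b (c+1)) = b 1 - b (n+1) := by
    intro n hn
    induction n with
    | zero => omega
    | succ m ih =>
      rcases Nat.eq_zero_or_pos m with h | h
      · subst h; simp
      · rw [Finset.sum_Icc_succ_top (by omega), ih h]; ring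
  have hb1 : b 1 = 0 := by simp [hb]
  have hbC : 0 ≤ b (C+1) := by
    simp only [hb, ha]
    push_cast
    rw [add_sub_cancel_right]
    positivity
  have hharm : ∑ c ∈ Icc 1 C, (1:ℝ)/(c:ℝ) ≤ 1 + Real.log C := aux_harmonic' C hC1
  calc ∑ c ∈ Icc 1 C, (f c (w c) - f c wstar)
      ≤ ∑ c ∈ Icc 1 C, (H / 2 * (b c - b (c+1)) + G ^ 2 / (2 * H) * (1 / (c:ℝ))) := hsum
    _ = H / 2 * (b 1 - b (C+1)) + G ^ 2 / (2 * H) * ∑ c ∈ Icc 1 C, (1:ℝ)/(c:ℝ) := by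
        rw [Finset.sum_add_distrib, ← Finset.mul_sum, ← Finset.mul_sum, htel C hC1]
    _ ≤ G ^ 2 / (2 * H) * (1 + Real.log C) := by
        have hfac : (0:ℝ) ≤ G^2 / (2*H) := by positivity
        have := mul_le_mul_of_nonneg_left hharm hfac
        nlinarith [hbC, hb1, hH]
end

section
/- Let x be a zero-mean bounded random variable independent of the zero-mean bounded random variable pair (u, v) where u is a random vector and v a random scalar, each measurable with respect to information available before x is drawn. Then E[(x − (v + uᵀN))²] where N contains x in its first coordinate decomposes so that, for the filtering losses, E[l̂_t(w)] = E[l_t(w)] + σ² − 2σ²w₁ + 2σ²w₁ = E[l_t(w)] + σ² for any fixed w ∈ ℝ^d; i.e., E[(y_t − wᵀY_t)² + 2σ²w₁] − E[(x_t − wᵀY_t)²] = σ², a constant independent of w. -/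
open MeasureTheory ProbabilityTheory Finset in
/-- For any fixed filter w, the expected surrogate loss exceeds the expected true
loss by exactly σ²: E[(y_t − wᵀY_t)² + 2σ²w₁] − E[(x_t − wᵀY_t)²] = σ². -/
theorem surrogate_loss_bias_constant
    {Ω : Type*} [MeasurableSpace Ω] (μ : Measure Ω) [IsProbabilityMeasure μ]
    (n : ℕ → Ω → ℝ) (hmeas : ∀ t, Measurable (n t))
    (hindep : iIndepFun n μ)
    (σ : ℝ) (hmean : ∀ t, ∫ ω, n t ω ∂μ = 0)
    (hvar : ∀ t, ∫ ω, (n t ω) ^ 2 ∂μ = σ ^ 2)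
    (hint : ∀ t s, Integrable (fun ω => n t ω * n s ω) μ)
    (x : ℕ → ℝ) (y : ℕ → Ω → ℝ) (hy : ∀ t ω, y t ω = x t + n t ω)
    (d : ℕ) (hd : 0 < d) (t : ℕ) (hdt : d ≤ t)
    (Y : ℕ → Ω → Fin d → ℝ) (hY : ∀ s ω i, Y s ω i = y (s - (i : ℕ)) ω)
    (w : Fin d → ℝ)
    (hint1 : Integrable (fun ω => (y t ω - ∑ i, w i * Y t ω i) ^ 2) μ)
    (hint2 : Integrable (fun ω => (x t - ∑ i, w i * Y t ω i) ^ 2) μ) :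
    (∫ ω, ((y t ω - ∑ i, w i * Y t ω i) ^ 2 + 2 * σ ^ 2 * w ⟨0, hd⟩) ∂μ)
      - (∫ ω, (x t - ∑ i, w i * Y t ω i) ^ 2 ∂μ) = σ ^ 2 := by
  -- integrability of each n s
  have hn_int : ∀ s, Integrable (n s) μ := by
    intro s
    exact ((memLp_two_iff_integrable_sq (hmeas s).aestronglyMeasurable).2
      (by simpa [sq] using hint s s)).integrable one_le_two
  -- cross moments
  have hcross : ∀ i : Fin d, (∫ ω, n (t - (i : ℕ)) ω * n t ω ∂μ)
      = if (i : ℕ) = 0 then σ ^ 2 else 0 := by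
    intro i
    by_cases h : (i : ℕ) = 0
    · simp [h, ← sq, hvar t]
    · have hne : t - (i : ℕ) ≠ t := by
        have hi : 0 < (i : ℕ) := Nat.pos_of_ne_zero h
        have hit : (i : ℕ) ≤ t := le_trans (le_of_lt i.isLt) hdt
        omega
      have hI : IndepFun (n (t - (i : ℕ))) (n t) μ := hindep.indepFun hne
      have := hI.integral_mul_eq_mul_integral (hn_int _).aestronglyMeasurable (hn_int _).aestronglyMeasurable
      rw [if_neg h]
      simpa [Pi.mul_apply, hmean] using this
  -- the inner sum as explicit function
  set S : Ω → ℝ := fun ω => ∑ i, w i * Y t ω i with hS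
  -- a ω := x t - S ω ; key expansion of a * n t
  have ha_eq : ∀ ω, (x t - S ω) * n t ω
      = (x t - ∑ i, w i * x (t - (i : ℕ))) * n t ω
        - ∑ i, w i * (n (t - (i : ℕ)) ω * n t ω) := by
    intro ω
    simp only [hS, hY, hy, mul_add]
    rw [Finset.sum_add_distrib,
      show (∑ i : Fin d, w i * (n (t - (i : ℕ)) ω * n t ω))
        = (∑ i : Fin d, w i * n (t - (i : ℕ)) ω) * n t ω from by
          rw [Finset.sum_mul]; exact Finset.sum_congr rfl fun i _ => (mul_assoc _ _ _).symm]
    ring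
  -- integral of a * n t
  have hint_an : Integrable (fun ω => (x t - S ω) * n t ω) μ := by
    have : Integrable (fun ω => (x t - ∑ i, w i * x (t - (i : ℕ))) * n t ω
        - ∑ i, w i * (n (t - (i : ℕ)) ω * n t ω)) μ := by
      exact ((hn_int t).const_mul _).sub
        (integrable_finset_sum _ fun i _ => (hint _ _).const_mul _)
    exact this.congr (Filter.Eventually.of_forall fun ω => (ha_eq ω).symm)
  have hint_an_val : (∫ ω, (x t - S ω) * n t ω ∂μ) = - (w ⟨0, hd⟩ * σ ^ 2) := by
    calc (∫ ω, (x t - S ω) * n t ω ∂μ)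
        = ∫ ω, ((x t - ∑ i, w i * x (t - (i : ℕ))) * n t ω
            - ∑ i, w i * (n (t - (i : ℕ)) ω * n t ω)) ∂μ := by
          exact integral_congr_ae (Filter.Eventually.of_forall ha_eq)
      _ = (x t - ∑ i, w i * x (t - (i : ℕ))) * (∫ ω, n t ω ∂μ)
            - ∑ i, w i * (∫ ω, n (t - (i : ℕ)) ω * n t ω ∂μ) := by
          rw [integral_sub (((hn_int t).const_mul _))
            (integrable_finset_sum _ fun i _ => (hint _ _).const_mul _),
            integral_const_mul, integral_finset_sum _ fun i _ => (hint _ _).const_mul _]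
          simp_rw [integral_const_mul]
      _ = - (w ⟨0, hd⟩ * σ ^ 2) := by
          rw [hmean, mul_zero, zero_sub]
          congr 1
          simp_rw [hcross]
          rw [Finset.sum_eq_single (⟨0, hd⟩ : Fin d)]
          · simp
          · intro i _ hi
            have : (i : ℕ) ≠ 0 := fun h => hi (Fin.ext h)
            simp [this]
          · simp
  -- pointwise expansion of the surrogate loss
  have hpt : ∀ ω, (y t ω - S ω) ^ 2
      = (x t - S ω) ^ 2 + 2 * ((x t - S ω) * n t ω) + (n t ω) ^ 2 := by
    intro ω; rw [hy]; ring
  have hint_n2 : Integrable (fun ω => (n t ω) ^ 2) μ := by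
    simpa [sq] using hint t t
  calc (∫ ω, ((y t ω - S ω) ^ 2 + 2 * σ ^ 2 * w ⟨0, hd⟩) ∂μ)
      - (∫ ω, (x t - S ω) ^ 2 ∂μ)
      = (∫ ω, (y t ω - S ω) ^ 2 ∂μ) + 2 * σ ^ 2 * w ⟨0, hd⟩
          - (∫ ω, (x t - S ω) ^ 2 ∂μ) := by
        rw [integral_add hint1 (integrable_const _), integral_const]
        simp
        rfl
    _ = ((∫ ω, (x t - S ω) ^ 2 ∂μ) + 2 * (∫ ω, (x t - S ω) * n t ω ∂μ)
          + (∫ ω, (n t ω) ^ 2 ∂μ)) + 2 * σ ^ 2 * w ⟨0, hd⟩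
          - (∫ ω, (x t - S ω) ^ 2 ∂μ) := by
        congr 2
        have hint2' : Integrable (fun ω => (x t - S ω) ^ 2) μ := hint2
        have h1 : Integrable (fun ω => 2 * ((x t - S ω) * n t ω)) μ :=
          hint_an.const_mul 2
        have hsum : Integrable
            (fun ω => (x t - S ω) ^ 2 + 2 * ((x t - S ω) * n t ω)) μ :=
          hint2'.add h1
        rw [integral_congr_ae (Filter.Eventually.of_forall hpt),
          integral_add hsum hint_n2, integral_add hint2' h1,
          integral_const_mul]
    _ = σ ^ 2 := by rw [hint_an_val, hvar]; ring
end
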